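/- arXiv:1108.1328 — 13 statements merged into one kernel-verified Lean document; each statement's English description precedes it below -/
import Mathlib

section
/- Let ε ≠ 0 be a real constant and suppose the functions τ_l satisfy the bilinear equation (bl4): (∂_y τ_{l+1})·τ_l − τ_{l+1}·(∂_y τ_l) = −ε·τ_{l+1}*·τ_l* for all l ∈ ℤ and (s,y) ∈ ℝ². Then the points γ_l := −(∂_y τ_l*)/τ_l* ∈ ℂ satisfy (γ_{l+1} − γ_l)/ε = (τ_{l+1} τ_l)/(τ_{l+1}* τ_l*) for all l, s, y; in particular |γ_{l+1} − γ_l| = |ε|, so γ is a discrete curve of constant segment length |ε|, and the consecutive tangent vectors satisfy (γ_{l+1} − γ_l)/ε = [τ_{l+1} τ_{l−1}* / (τ_{l+1}* τ_{l−1})]·(γ_l − γ_{l−1})/ε with a unimodular factor. -/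
open Complex ComplexConjugate

theorem stmt_0 (ε : ℝ) (hε : ε ≠ 0)
    (τ : ℤ → ℝ → ℝ → ℂ)
    (hsmooth : ∀ l : ℤ, ContDiff ℝ (⊤ : ℕ∞) (fun q : ℝ × ℝ => τ l q.1 q.2))
    (hnz : ∀ (l : ℤ) (s y : ℝ), τ l s y ≠ 0)
    (hbl4 : ∀ (l : ℤ) (s y : ℝ),
      deriv (fun y' => τ (l + 1) s y') y * τ l s y
        - τ (l + 1) s y * deriv (fun y' => τ l s y') y
        = -(ε : ℂ) * conj (τ (l + 1) s y) * conj (τ l s y))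
    (γ : ℤ → ℝ → ℝ → ℂ)
    (hγ : ∀ (l : ℤ) (s y : ℝ),
      γ l s y = -(deriv (fun y' => conj (τ l s y')) y) / conj (τ l s y)) :
    ∀ (l : ℤ) (s y : ℝ),
      (γ (l + 1) s y - γ l s y) / (ε : ℂ)
          = τ (l + 1) s y * τ l s y / (conj (τ (l + 1) s y) * conj (τ l s y)) ∧
      ‖γ (l + 1) s y - γ l s y‖ = |ε| ∧
      ‖τ (l + 1) s y * conj (τ (l - 1) s y)
          / (conj (τ (l + 1) s y) * τ (l - 1) s y)‖ = 1 ∧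
      (γ (l + 1) s y - γ l s y) / (ε : ℂ)
          = (τ (l + 1) s y * conj (τ (l - 1) s y)
              / (conj (τ (l + 1) s y) * τ (l - 1) s y))
            * ((γ l s y - γ (l - 1) s y) / (ε : ℂ)) := by
  -- differentiability of y' ↦ τ l s y'
  have hdiff : ∀ (l : ℤ) (s y : ℝ), DifferentiableAt ℝ (fun y' => τ l s y') y := by
    intro l s y
    have h1 : Differentiable ℝ (fun q : ℝ × ℝ => τ l q.1 q.2) :=
      (hsmooth l).differentiable (by simp)
    exact (h1.comp ((differentiable_const s).prodMk differentiable_id)).differentiableAt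
  -- deriv commutes with conj
  have hderconj : ∀ (l : ℤ) (s y : ℝ),
      deriv (fun y' => conj (τ l s y')) y = conj (deriv (fun y' => τ l s y') y) := by
    intro l s y
    have h := ((hdiff l s y).hasDerivAt)
    have h2 : HasDerivAt (fun y' => conj (τ l s y'))
        (conj (deriv (fun y' => τ l s y') y)) y := by
      exact h.star
    exact h2.deriv
  -- key formula
  have key : ∀ (l : ℤ) (s y : ℝ),
      γ (l + 1) s y - γ l s y
        = (ε : ℂ) * (τ (l + 1) s y * τ l s y / (conj (τ (l + 1) s y) * conj (τ l s y))) := by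
    intro l s y
    have hb := congrArg (starRingEnd ℂ) (hbl4 l s y)
    simp only [map_sub, map_mul, map_neg, Complex.conj_conj, Complex.conj_ofReal] at hb
    have ha : conj (τ (l + 1) s y) ≠ 0 := by
      simpa using (hnz (l + 1) s y)
    have hb0 : conj (τ l s y) ≠ 0 := by simpa using (hnz l s y)
    rw [hγ (l + 1) s y, hγ l s y, hderconj, hderconj]
    field_simp
    linear_combination -hb
  intro l s y
  have ha : conj (τ (l + 1) s y) ≠ 0 := by simpa using (hnz (l + 1) s y)
  have hb0 : conj (τ l s y) ≠ 0 := by simpa using (hnz l s y)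
  have hc : conj (τ (l - 1) s y) ≠ 0 := by simpa using (hnz (l - 1) s y)
  have hεC : (ε : ℂ) ≠ 0 := by exact_mod_cast hε
  have h1 : τ (l + 1) s y ≠ 0 := hnz _ _ _
  have h2 : τ l s y ≠ 0 := hnz _ _ _
  have h3 : τ (l - 1) s y ≠ 0 := hnz _ _ _
  refine ⟨?_, ?_, ?_, ?_⟩
  · rw [key l s y]; field_simp
  · rw [key l s y]
    rw [norm_mul, norm_div, norm_mul, norm_mul, Complex.norm_conj, Complex.norm_conj,
      Complex.norm_real, Real.norm_eq_abs]
    rw [div_self (mul_ne_zero (norm_ne_zero_iff.mpr h1) (norm_ne_zero_iff.mpr h2))]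
    ring
  · rw [norm_div, norm_mul, norm_mul, Complex.norm_conj, Complex.norm_conj]
    rw [div_self (mul_ne_zero (norm_ne_zero_iff.mpr h1) (norm_ne_zero_iff.mpr h3))]
  · have k1 := key l s y
    have k2 := key (l - 1) s y
    rw [sub_add_cancel] at k2
    rw [k1, k2]
    field_simp
end

section
/- Let ε ≠ 0 be a real constant and suppose the functions τ_l satisfy the bilinear equation (bl3): (∂_s∂_y τ_l)·τ_l − (∂_s τ_l)·(∂_y τ_l) = −τ_{l+1}*·τ_{l−1}* for all l ∈ ℤ and (s,y) ∈ ℝ². Then the points γ_l := −(∂_y τ_l*)/τ_l* ∈ ℂ satisfy ∂_s γ_l = τ_{l+1} τ_{l−1} / (τ_l*)² for all l, s, y. -/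
open Complex ComplexConjugate

theorem stmt_1 (ε : ℝ) (hε : ε ≠ 0)
    (τ : ℤ → ℝ → ℝ → ℂ)
    (hsmooth : ∀ l : ℤ, ContDiff ℝ (⊤ : ℕ∞) (fun q : ℝ × ℝ => τ l q.1 q.2))
    (hnz : ∀ (l : ℤ) (s y : ℝ), τ l s y ≠ 0)
    (hbl3 : ∀ (l : ℤ) (s y : ℝ),
      deriv (fun s' => deriv (fun y' => τ l s' y') y) s * τ l s y
        - deriv (fun s' => τ l s' y) s * deriv (fun y' => τ l s y') y
        = -(conj (τ (l + 1) s y) * conj (τ (l - 1) s y)))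
    (γ : ℤ → ℝ → ℝ → ℂ)
    (hγ : ∀ (l : ℤ) (s y : ℝ),
      γ l s y = -(deriv (fun y' => conj (τ l s y')) y) / conj (τ l s y)) :
    ∀ (l : ℤ) (s y : ℝ),
      deriv (fun s' => γ l s' y) s
        = τ (l + 1) s y * τ (l - 1) s y / (conj (τ l s y)) ^ 2 := by
  -- conj commutes with deriv
  have hconj : ∀ (h : ℝ → ℂ) (x : ℝ), DifferentiableAt ℝ h x →
      deriv (fun t => conj (h t)) x = conj (deriv h x) := by
    intro h x hd
    have := (Complex.conjCLE.hasFDerivAt.comp_hasDerivAt x hd.hasDerivAt).deriv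
    simpa [Function.comp_def] using this
  intro l s y
  set f : ℝ × ℝ → ℂ := fun q => τ l q.1 q.2 with hf
  have hfc : ContDiff ℝ (⊤ : ℕ∞) f := hsmooth l
  have hfd : Differentiable ℝ f := hfc.differentiable (by simp)
  set g : ℝ × ℝ → ℂ := fun q => fderiv ℝ f q (0, 1) with hg
  have hgc : ContDiff ℝ (⊤ : ℕ∞) g := (hfc.fderiv_right (by simp)).clm_apply contDiff_const
  -- partial derivative in y equals g
  have hA : ∀ s' y' : ℝ, deriv (fun t => τ l s' t) y' = g (s', y') := by
    intro s' y'
    have h1 : HasDerivAt (fun t : ℝ => ((s', t) : ℝ × ℝ)) (0, 1) y' :=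
      HasDerivAt.prodMk (hasDerivAt_const y' s') (hasDerivAt_id y')
    have h2 : HasDerivAt (fun t => f (s', t)) (fderiv ℝ f (s', y') (0, 1)) y' :=
      (hfd (s', y')).hasFDerivAt.comp_hasDerivAt y' h1
    exact h2.deriv
  -- differentiability of the partial derivative function in s
  have hgfun : (fun s' => deriv (fun t => τ l s' t) y) = fun s' => g (s', y) :=
    funext fun s' => hA s' y
  have hAdiff : DifferentiableAt ℝ (fun s' => deriv (fun t => τ l s' t) y) s := by
    rw [hgfun]
    have h1 : HasDerivAt (fun s' : ℝ => ((s', y) : ℝ × ℝ)) (1, 0) s :=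
      HasDerivAt.prodMk (hasDerivAt_id s) (hasDerivAt_const s y)
    exact (((hgc.differentiable (by simp)) (s, y)).hasFDerivAt.comp_hasDerivAt s h1).differentiableAt
  -- differentiability of τ in s and in y
  have hBdiff : ∀ s' : ℝ, DifferentiableAt ℝ (fun t => τ l t y) s' := by
    intro s'
    have h1 : HasDerivAt (fun t : ℝ => ((t, y) : ℝ × ℝ)) (1, 0) s' :=
      HasDerivAt.prodMk (hasDerivAt_id s') (hasDerivAt_const s' y)
    exact ((hfd (s', y)).hasFDerivAt.comp_hasDerivAt s' h1).differentiableAt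
  have hYdiff : ∀ s' y' : ℝ, DifferentiableAt ℝ (fun t => τ l s' t) y' := by
    intro s' y'
    have h1 : HasDerivAt (fun t : ℝ => ((s', t) : ℝ × ℝ)) (0, 1) y' :=
      HasDerivAt.prodMk (hasDerivAt_const y' s') (hasDerivAt_id y')
    exact ((hfd (s', y')).hasFDerivAt.comp_hasDerivAt y' h1).differentiableAt
  -- γ as conjugate of F
  set F : ℝ → ℂ := fun s' => -(deriv (fun t => τ l s' t) y) / τ l s' y with hF
  have hγF : (fun s' => γ l s' y) = fun s' => conj (F s') := by
    funext s'
    rw [hγ, hF]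
    simp only [map_div₀, map_neg]
    rw [hconj (fun t => τ l s' t) y (hYdiff s' y)]
  have hFdiff : DifferentiableAt ℝ F s := (hAdiff.neg).div (hBdiff s) (hnz l s y)
  rw [hγF, hconj F s hFdiff]
  -- compute deriv F s
  have hFder : deriv F s = conj (τ (l + 1) s y) * conj (τ (l - 1) s y) / (τ l s y) ^ 2 := by
    rw [hF]
    rw [deriv_fun_div hAdiff.fun_neg (hBdiff s) (hnz l s y), deriv.fun_neg]
    have hnum : -(deriv (fun s' => deriv (fun t => τ l s' t) y) s) * τ l s y
        - -(deriv (fun t => τ l s t) y) * deriv (fun t => τ l t y) s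
        = -(deriv (fun s' => deriv (fun t => τ l s' t) y) s * τ l s y
            - deriv (fun t => τ l t y) s * deriv (fun t => τ l s t) y) := by ring
    rw [hnum, hbl3 l s y]
    rw [neg_neg]
  rw [hFder]
  simp [map_div₀, map_mul, map_pow]
end

section
/- Let ε ≠ 0 be a real constant and suppose the functions τ_l satisfy (bl2): τ_l τ_l* = (1/2)(τ_{l−1}* τ_{l+1} + τ_{l+1}* τ_{l−1}), (bl3): (∂_s∂_y τ_l)·τ_l − (∂_s τ_l)·(∂_y τ_l) = −τ_{l+1}* τ_{l−1}*, and (bl4): (∂_y τ_{l+1})·τ_l − τ_{l+1}·(∂_y τ_l) = −ε τ_{l+1}* τ_l*, for all l ∈ ℤ and (s,y) ∈ ℝ². Let θ_l(s,y) be real-valued smooth functions with τ_l/τ_l* = exp(i θ_l/2), set γ_l := −(∂_y τ_l*)/τ_l* and K_l := (θ_{l+1} − θ_{l−1})/2. Then the motion equation holds: cos(K_l/2)·∂_s γ_l = exp(−i K_l/2)·(γ_{l+1} − γ_l)/ε for all l, s, y. -/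
open Complex ComplexConjugate

private lemma conj_deriv' (f : ℝ → ℂ) (x : ℝ) :
    deriv (fun t => conj (f t)) x = conj (deriv f x) := by
  have h : (fun t => conj (f t)) = (Complex.conjCLE : ℂ ≃L[ℝ] ℂ) ∘ f := by
    funext t; simp [Complex.conjCLE_apply]
  rw [h, ← fderiv_apply_one_eq_deriv, Complex.conjCLE.comp_fderiv]
  simp [Complex.conjCLE_apply, fderiv_apply_one_eq_deriv]

private lemma partial_y_eq (F : ℝ × ℝ → ℂ) (hF : ContDiff ℝ (⊤ : ℕ∞) F) (s y : ℝ) :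
    deriv (fun y' => F (s, y')) y = fderiv ℝ F (s, y) (0, 1) := by
  have h1 : HasDerivAt (fun y' : ℝ => ((s, y') : ℝ × ℝ)) ((0 : ℝ), (1 : ℝ)) y :=
    (hasDerivAt_const y s).prodMk (hasDerivAt_id y)
  have h2 : HasFDerivAt F (fderiv ℝ F (s, y)) (s, y) :=
    (hF.differentiable (by simp) (s, y)).hasFDerivAt
  exact (h2.comp_hasDerivAt y h1).deriv

private lemma diff_partial (F : ℝ × ℝ → ℂ) (hF : ContDiff ℝ (⊤ : ℕ∞) F) (y : ℝ) :
    Differentiable ℝ (fun s => deriv (fun y' => F (s, y')) y) := by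
  have heq : (fun s => deriv (fun y' => F (s, y')) y)
      = fun s => fderiv ℝ F (s, y) (0, 1) := funext fun s => partial_y_eq F hF s y
  rw [heq]
  have h1 : ContDiff ℝ (⊤ : ℕ∞) (fderiv ℝ F) := hF.fderiv_right (by simp)
  have h2 : Differentiable ℝ (fun s : ℝ => fderiv ℝ F (s, y)) :=
    (h1.differentiable (by simp)).comp (differentiable_id.prodMk (differentiable_const y))
  exact h2.clm_apply (differentiable_const _)

theorem stmt_2 (ε : ℝ) (hε : ε ≠ 0)
    (τ : ℤ → ℝ → ℝ → ℂ)
    (hsmooth : ∀ l : ℤ, ContDiff ℝ (⊤ : ℕ∞) (fun q : ℝ × ℝ => τ l q.1 q.2))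
    (hnz : ∀ (l : ℤ) (s y : ℝ), τ l s y ≠ 0)
    (hbl2 : ∀ (l : ℤ) (s y : ℝ),
      τ l s y * conj (τ l s y)
        = (1 / 2 : ℂ) * (conj (τ (l - 1) s y) * τ (l + 1) s y
            + conj (τ (l + 1) s y) * τ (l - 1) s y))
    (hbl3 : ∀ (l : ℤ) (s y : ℝ),
      deriv (fun s' => deriv (fun y' => τ l s' y') y) s * τ l s y
        - deriv (fun s' => τ l s' y) s * deriv (fun y' => τ l s y') y
        = -(conj (τ (l + 1) s y) * conj (τ (l - 1) s y)))
    (hbl4 : ∀ (l : ℤ) (s y : ℝ),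
      deriv (fun y' => τ (l + 1) s y') y * τ l s y
        - τ (l + 1) s y * deriv (fun y' => τ l s y') y
        = -(ε : ℂ) * conj (τ (l + 1) s y) * conj (τ l s y))
    (θ : ℤ → ℝ → ℝ → ℝ)
    (hθsmooth : ∀ l : ℤ, ContDiff ℝ (⊤ : ℕ∞) (fun q : ℝ × ℝ => θ l q.1 q.2))
    (hθ : ∀ (l : ℤ) (s y : ℝ),
      τ l s y / conj (τ l s y) = Complex.exp (Complex.I * (θ l s y : ℂ) / 2))
    (γ : ℤ → ℝ → ℝ → ℂ)
    (hγ : ∀ (l : ℤ) (s y : ℝ),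
      γ l s y = -(deriv (fun y' => conj (τ l s y')) y) / conj (τ l s y))
    (K : ℤ → ℝ → ℝ → ℝ)
    (hK : ∀ (l : ℤ) (s y : ℝ), K l s y = (θ (l + 1) s y - θ (l - 1) s y) / 2) :
    ∀ (l : ℤ) (s y : ℝ),
      (Real.cos (K l s y / 2) : ℂ) * deriv (fun s' => γ l s' y) s
        = Complex.exp (-Complex.I * ((K l s y / 2 : ℝ) : ℂ))
            * ((γ (l + 1) s y - γ l s y) / (ε : ℂ)) := by
  intro l s y
  have hbnz : ∀ m : ℤ, conj (τ m s y) ≠ 0 := fun m => by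
    simpa using hnz m s y
  -- Step A: ∂ₛ γ_l
  set f : ℝ → ℂ := fun s' => deriv (fun y' => τ l s' y') y with hf
  set g : ℝ → ℂ := fun s' => τ l s' y with hg
  have hfdiff : DifferentiableAt ℝ f s :=
    (diff_partial (fun q : ℝ × ℝ => τ l q.1 q.2) (hsmooth l) y) s
  have hgdiff : DifferentiableAt ℝ g s :=
    (((hsmooth l).differentiable (by simp)).comp
      (differentiable_id.prodMk (differentiable_const y))) s
  have hcfdiff : DifferentiableAt ℝ (fun s' => conj (f s')) s :=
    (Complex.conjCLE.differentiable.differentiableAt).comp s hfdiff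
  have hcgdiff : DifferentiableAt ℝ (fun s' => conj (g s')) s :=
    (Complex.conjCLE.differentiable.differentiableAt).comp s hgdiff
  have hA : deriv (fun s' => γ l s' y) s
      = τ (l + 1) s y * τ (l - 1) s y / (conj (τ l s y)) ^ 2 := by
    have hfun : (fun s' => γ l s' y) = fun s' => -(conj (f s')) / conj (g s') := by
      funext s'; rw [hγ, conj_deriv']
    rw [hfun]
    rw [deriv_fun_div hcfdiff.fun_neg hcgdiff (hbnz l)]
    rw [deriv.fun_neg, conj_deriv', conj_deriv']
    have h3 := congrArg conj (hbl3 l s y)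
    simp only [map_sub, map_mul, map_neg, Complex.conj_conj] at h3
    have : -conj (deriv f s) * conj (g s) - -conj (f s) * conj (deriv g s)
        = τ (l + 1) s y * τ (l - 1) s y := by
      linear_combination -h3
    rw [this]
  -- Step B: γ_{l+1} - γ_l
  have hB : γ (l + 1) s y - γ l s y
      = (ε : ℂ) * τ (l + 1) s y * τ l s y
          / (conj (τ (l + 1) s y) * conj (τ l s y)) := by
    have h4 := congrArg conj (hbl4 l s y)
    simp only [map_sub, map_mul, map_neg, Complex.conj_conj, Complex.conj_ofReal] at h4
    rw [hγ, hγ, conj_deriv', conj_deriv']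
    have n3 := hbnz (l + 1)
    have n4 := hbnz l
    field_simp [n3, n4]
    linear_combination -h4
  -- Step C: the exponential identities
  set E := Complex.exp (Complex.I * ((K l s y / 2 : ℝ) : ℂ)) with hE
  have hEne : E ≠ 0 := Complex.exp_ne_zero _
  have hE2 : E ^ 2 * (conj (τ (l + 1) s y) * τ (l - 1) s y)
      = τ (l + 1) s y * conj (τ (l - 1) s y) := by
    have e1 := hθ (l + 1) s y
    have e2 := hθ (l - 1) s y
    have h5 : E ^ 2 = Complex.exp (Complex.I * ((θ (l + 1) s y : ℝ) : ℂ) / 2)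
        * (Complex.exp (Complex.I * ((θ (l - 1) s y : ℝ) : ℂ) / 2))⁻¹ := by
      rw [hE, ← Complex.exp_neg, ← Complex.exp_add, sq, ← Complex.exp_add, hK]
      congr 1
      push_cast
      ring
    rw [h5, ← e1, ← e2]
    have n1 := hnz (l + 1) s y
    have n2 := hnz (l - 1) s y
    have n3 := hbnz (l + 1)
    have n4 := hbnz (l - 1)
    field_simp [n1, n2, n3, n4]
  have hcos : ((Real.cos (K l s y / 2)) : ℂ) = (E + E⁻¹) / 2 := by
    rw [Complex.ofReal_cos, eq_div_iff (two_ne_zero' ℂ), mul_comm, Complex.two_cos, hE,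
      ← Complex.exp_neg, neg_mul, mul_comm (((K l s y / 2 : ℝ) : ℂ)) Complex.I]
  have hnegE : Complex.exp (-Complex.I * ((K l s y / 2 : ℝ) : ℂ)) = E⁻¹ := by
    rw [← Complex.exp_neg, neg_mul]
  rw [hA, hB, hcos, hnegE]
  have hb2 := hbl2 l s y
  field_simp
  rw [div_eq_div_iff
    (pow_ne_zero 2 (hbnz l))
    (mul_ne_zero (mul_ne_zero (hbnz l) (Complex.ofReal_ne_zero.2 hε)) (hbnz (l + 1)))]
  linear_combination ((ε : ℂ) * τ (l + 1) s y * conj (τ l s y)) * hE2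
    - (2 * (ε : ℂ) * τ (l + 1) s y * conj (τ l s y)) * hb2
end

section
/- Let ε ≠ 0 be a real constant and suppose the functions τ_l satisfy (bl1): (∂_s τ_l)·τ_l* − τ_l·(∂_s τ_l*) = (1/(2ε))(τ_{l−1}* τ_{l+1} − τ_{l+1}* τ_{l−1}) and (bl2): τ_l τ_l* = (1/2)(τ_{l−1}* τ_{l+1} + τ_{l+1}* τ_{l−1}), for all l ∈ ℤ and (s,y) ∈ ℝ². Let θ_l(s,y) be real-valued smooth functions with τ_l/τ_l* = exp(i θ_l/2). Then θ satisfies the semi-discrete potential modified KdV equation: ∂_s θ_l = (2/ε)·tan((θ_{l+1} − θ_{l−1})/4) for all l, s, y. -/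
open Complex ComplexConjugate

/-- If `z / conj z = exp (I φ)` for `z ≠ 0`, then `tan (φ/2) = z.im / z.re`. -/
lemma tan_half_of_div_conj (z : ℂ) (hz : z ≠ 0) (φ : ℝ)
    (h : z / conj z = Complex.exp (Complex.I * (φ : ℂ))) :
    Real.tan (φ / 2) = z.im / z.re := by
  have hconj : (conj z : ℂ) ≠ 0 := by simpa using hz
  have habs : (‖z‖ : ℂ) ≠ 0 := by
    simpa using (norm_ne_zero_iff.mpr hz)
  have hzrep : (‖z‖ : ℂ) * Complex.exp (z.arg * Complex.I) = z :=
    Complex.norm_mul_exp_arg_mul_I z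
  have hconjrep : (conj z : ℂ) = (‖z‖ : ℂ) * Complex.exp (-(z.arg * Complex.I)) := by
    conv_lhs => rw [← hzrep]
    rw [map_mul, ← Complex.exp_conj]
    simp
  have h2 : z / conj z = Complex.exp (2 * z.arg * Complex.I) := by
    rw [div_eq_iff hconj, hconjrep]
    conv_lhs => rw [← hzrep]
    rw [← mul_assoc, mul_comm _ ((‖z‖ : ℂ)), mul_assoc, ← Complex.exp_add]
    congr 2
    ring
  rw [h2] at h
  obtain ⟨n, hn⟩ := Complex.exp_eq_exp_iff_exists_int.mp h.symm
  have hre : φ / 2 = z.arg + n * Real.pi := by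
    have := congrArg Complex.im hn
    simp [Complex.ext_iff] at this
    linarith
  rw [hre]
  rw [Real.tan_periodic.int_mul n z.arg]
  exact Complex.tan_arg z

theorem stmt_3 (ε : ℝ) (hε : ε ≠ 0)
    (τ : ℤ → ℝ → ℝ → ℂ)
    (hsmooth : ∀ l : ℤ, ContDiff ℝ (⊤ : ℕ∞) (fun q : ℝ × ℝ => τ l q.1 q.2))
    (hnz : ∀ (l : ℤ) (s y : ℝ), τ l s y ≠ 0)
    (hbl1 : ∀ (l : ℤ) (s y : ℝ),
      deriv (fun s' => τ l s' y) s * conj (τ l s y)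
        - τ l s y * deriv (fun s' => conj (τ l s' y)) s
        = (1 / (2 * ε) : ℂ) * (conj (τ (l - 1) s y) * τ (l + 1) s y
            - conj (τ (l + 1) s y) * τ (l - 1) s y))
    (hbl2 : ∀ (l : ℤ) (s y : ℝ),
      τ l s y * conj (τ l s y)
        = (1 / 2 : ℂ) * (conj (τ (l - 1) s y) * τ (l + 1) s y
            + conj (τ (l + 1) s y) * τ (l - 1) s y))
    (θ : ℤ → ℝ → ℝ → ℝ)
    (hθsmooth : ∀ l : ℤ, ContDiff ℝ (⊤ : ℕ∞) (fun q : ℝ × ℝ => θ l q.1 q.2))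
    (hθ : ∀ (l : ℤ) (s y : ℝ),
      τ l s y / conj (τ l s y) = Complex.exp (Complex.I * (θ l s y : ℂ) / 2)) :
    ∀ (l : ℤ) (s y : ℝ),
      deriv (fun s' => θ l s' y) s
        = (2 / ε) * Real.tan ((θ (l + 1) s y - θ (l - 1) s y) / 4) := by
  intro l s y
  -- differentiability of the slices
  have hτdiff : DifferentiableAt ℝ (fun s' => τ l s' y) s := by
    have h1 : Differentiable ℝ (fun q : ℝ × ℝ => τ l q.1 q.2) :=
      (hsmooth l).differentiable (by simp)
    exact (h1.comp (differentiable_id.prodMk (differentiable_const y))).differentiableAt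
  have hθdiff : DifferentiableAt ℝ (fun s' => θ l s' y) s := by
    have h1 : Differentiable ℝ (fun q : ℝ × ℝ => θ l q.1 q.2) :=
      (hθsmooth l).differentiable (by simp)
    exact (h1.comp (differentiable_id.prodMk (differentiable_const y))).differentiableAt
  set T' : ℂ := deriv (fun s' => τ l s' y) s with hT'
  set θ' : ℝ := deriv (fun s' => θ l s' y) s with hθ'
  have hFd : HasDerivAt (fun s' => τ l s' y) T' s := hτdiff.hasDerivAt
  have hGd : HasDerivAt (fun s' => θ l s' y) θ' s := hθdiff.hasDerivAt
  have hconjnz : ∀ (m : ℤ) (s' : ℝ), conj (τ m s' y) ≠ 0 := fun m s' => by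
    simpa using hnz m s' y
  -- the defining identity, multiplied out
  have hid : ∀ s' : ℝ, τ l s' y
      = Complex.exp (Complex.I * (θ l s' y : ℂ) / 2) * conj (τ l s' y) := by
    intro s'
    have h := hθ l s' y
    rwa [div_eq_iff (hconjnz l s')] at h
  -- derivative of the conjugate
  have hconjd : HasDerivAt (fun s' => conj (τ l s' y)) (conj T') s := by
    have := Complex.conjCLE.toContinuousLinearMap.hasFDerivAt.comp_hasDerivAt s hFd
    exact this
  -- derivative of the right-hand side of `hid`
  have h1 : HasDerivAt (fun s' => ((θ l s' y : ℝ) : ℂ)) (θ' : ℂ) s := hGd.ofReal_comp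
  have h2 : HasDerivAt (fun s' => Complex.I * (θ l s' y : ℂ) / 2)
      (Complex.I * (θ' : ℂ) / 2) s := (h1.const_mul Complex.I).div_const 2
  have h3 := h2.cexp
  have h5 := h3.mul hconjd
  have hfun : (fun s' => τ l s' y)
      = fun s' => Complex.exp (Complex.I * (θ l s' y : ℂ) / 2) * conj (τ l s' y) :=
    funext hid
  rw [hfun] at hFd
  have hTeq := hFd.unique h5
  set E : ℂ := Complex.exp (Complex.I * (θ l s y : ℂ) / 2) with hE
  set a : ℂ := τ l s y with ha
  have haE : a = E * conj a := hid s
  have key : T' * conj a - a * conj T' = Complex.I * (θ' : ℂ) / 2 * (a * conj a) := by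
    calc T' * conj a - a * conj T'
        = (E * (Complex.I * (θ' : ℂ) / 2) * conj a + E * conj T') * conj a
            - E * conj a * conj T' := by rw [← hTeq, ← haE]
      _ = Complex.I * (θ' : ℂ) / 2 * (E * conj a * conj a) := by ring
      _ = Complex.I * (θ' : ℂ) / 2 * (a * conj a) := by rw [← haE]
  set A : ℂ := conj (τ (l - 1) s y) * τ (l + 1) s y with hA
  have hBconj : conj (τ (l + 1) s y) * τ (l - 1) s y = conj A := by
    rw [hA, map_mul, Complex.conj_conj, mul_comm]
  -- the complex equation
  have hcomplex : Complex.I * (θ' : ℂ) / 2 * ((1 / 2 : ℂ) * (A + conj A))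
      = (1 / (2 * ε) : ℂ) * (A - conj A) := by
    have hb1 := hbl1 l s y
    rw [hconjd.deriv, ← hT', key, hbl2 l s y, hBconj] at hb1
    exact hb1
  have hre : θ' * A.re / 2 = A.im / ε := by
    have him := congrArg Complex.im hcomplex
    rw [Complex.add_conj, Complex.sub_conj] at him
    simp [Complex.div_im, Complex.div_re, Complex.mul_im, Complex.mul_re] at him
    field_simp at him ⊢
    linarith
  -- positivity of A.re
  have hAre : A.re = Complex.normSq a := by
    have h := hbl2 l s y
    rw [hBconj, Complex.add_conj, Complex.mul_conj, ← ha] at h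
    have : ((Complex.normSq a : ℝ) : ℂ) = ((A.re : ℝ) : ℂ) := by
      rw [h]; push_cast; ring
    exact (Complex.ofReal_inj.mp this).symm
  have hArepos : 0 < A.re := by
    rw [hAre]
    exact Complex.normSq_pos.mpr (hnz l s y)
  -- the argument identity
  have hA0 : A ≠ 0 := mul_ne_zero (hconjnz (l - 1) s) (hnz (l + 1) s y)
  have hAdiv : A / conj A
      = Complex.exp (Complex.I * (((θ (l + 1) s y - θ (l - 1) s y) / 2 : ℝ) : ℂ)) := by
    have hp := hθ (l + 1) s y
    have hm := hθ (l - 1) s y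
    have h1 : A / conj A
        = (τ (l + 1) s y / conj (τ (l + 1) s y)) / (τ (l - 1) s y / conj (τ (l - 1) s y)) := by
      rw [hA, map_mul, Complex.conj_conj]
      field_simp
    rw [h1, hp, hm, ← Complex.exp_sub]
    congr 1
    push_cast
    ring
  have htan := tan_half_of_div_conj A hA0 _ hAdiv
  have h4 : (θ (l + 1) s y - θ (l - 1) s y) / 2 / 2
      = (θ (l + 1) s y - θ (l - 1) s y) / 4 := by ring
  rw [h4] at htan
  rw [htan]
  have hAre0 : A.re ≠ 0 := ne_of_gt hArepos
  field_simp at hre ⊢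
  linarith
end

section
/- Fix N ∈ ℕ, real parameters a, p_i, α_i with p_i ≠ 0, a p_i ≠ ±1, and purely imaginary parameters β_i ∈ iℝ (i = 1,…,N). For k, l, m ∈ ℤ and (u,v,y) ∈ ℝ³ define f_k^{(i)}(l,m) := α_i p_i^k (1 − a p_i)^{−l} (1 + a p_i)^{−m} exp(u/(1 − a p_i) + v/(1 + a p_i) + y/p_i) + β_i (−p_i)^k (1 + a p_i)^{−l} (1 − a p_i)^{−m} exp(u/(1 + a p_i) + v/(1 − a p_i) − y/p_i), and σ^k_{l,m} := det(f_{k+j−1}^{(i)}(l,m))_{i,j=1,…,N}. Then σ^{k+1}_{l,m} = C·(σ^k_{l,m})*, where C = ∏_{i=1}^N p_i ∈ ℝ and * denotes complex conjugation, for all k, l, m and all real u, v, y. -/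
open Complex ComplexConjugate

theorem stmt_8 (N : ℕ) (a : ℝ)
    (p α : Fin N → ℝ) (β : Fin N → ℂ)
    (hβ : ∀ i, (β i).re = 0)
    (hp : ∀ i, p i ≠ 0)
    (hap1 : ∀ i, a * p i ≠ 1) (hap2 : ∀ i, a * p i ≠ -1)
    (σ : ℤ → ℤ → ℤ → ℝ → ℝ → ℝ → ℂ)
    (hσ : ∀ (k l m : ℤ) (u v y : ℝ),
      σ k l m u v y = Matrix.det (Matrix.of fun i j : Fin N =>
        (α i : ℂ) * (p i : ℂ) ^ (k + (j : ℕ))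
            * ((1 : ℂ) - (a : ℂ) * (p i : ℂ)) ^ (-l)
            * ((1 : ℂ) + (a : ℂ) * (p i : ℂ)) ^ (-m)
            * Complex.exp ((u : ℂ) / (1 - (a : ℂ) * (p i : ℂ))
                + (v : ℂ) / (1 + (a : ℂ) * (p i : ℂ)) + (y : ℂ) / (p i : ℂ))
        + β i * (-(p i : ℂ)) ^ (k + (j : ℕ))
            * ((1 : ℂ) + (a : ℂ) * (p i : ℂ)) ^ (-l)
            * ((1 : ℂ) - (a : ℂ) * (p i : ℂ)) ^ (-m)
            * Complex.exp ((u : ℂ) / (1 + (a : ℂ) * (p i : ℂ))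
                + (v : ℂ) / (1 - (a : ℂ) * (p i : ℂ)) - (y : ℂ) / (p i : ℂ)))) :
    ∀ (k l m : ℤ) (u v y : ℝ),
      σ (k + 1) l m u v y = ((∏ i : Fin N, p i : ℝ) : ℂ) * conj (σ k l m u v y) := by
  intro k l m u v y
  rw [hσ, hσ]
  rw [RingHom.map_det]
  push_cast
  rw [← Matrix.det_mul_column (fun i => (p i : ℂ))]
  congr 1
  ext i j
  have hpc : (p i : ℂ) ≠ 0 := by exact_mod_cast hp i
  have hβc : conj (β i) = -β i := by
    apply Complex.ext <;> simp [hβ i]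
  simp only [RingHom.mapMatrix_apply, Matrix.map_apply, Matrix.of_apply, map_add, map_mul, Complex.conj_ofReal,
    map_zpow₀, map_neg, ← Complex.exp_conj, map_sub, map_div₀, map_one, hβc]
  have h1 : k + 1 + (j : ℕ) = (k + (j : ℕ)) + 1 := by ring
  rw [h1, zpow_add₀ hpc, zpow_add₀ (neg_ne_zero.mpr hpc)]
  simp only [zpow_one]
  ring
end

section
/- Fix M ∈ ℕ, set N = 2M, fix a real parameter a and complex parameters p_i, α_i, β_i (i = 1,…,2M) with p_i ≠ 0, a² p_i² ≠ 1, and the breather pairing p_{2r} = p_{2r−1}*, α_{2r} = α_{2r−1}*, β_{2r} = −β_{2r−1}* (r = 1,…,M). For k, l, m ∈ ℤ and (u,v,y) ∈ ℝ³ define f_k^{(i)}(l,m) := α_i p_i^k (1 − a p_i)^{−l} (1 + a p_i)^{−m} exp(u/(1 − a p_i) + v/(1 + a p_i) + y/p_i) + β_i (−p_i)^k (1 + a p_i)^{−l} (1 − a p_i)^{−m} exp(u/(1 + a p_i) + v/(1 − a p_i) − y/p_i), and σ^k_{l,m} := det(f_{k+j−1}^{(i)}(l,m))_{i,j=1,…,N}.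 Then σ^{k+1}_{l,m} = C·(σ^k_{l,m})*, where C = (−1)^M ∏_{r=1}^M |p_{2r−1}|² ∈ ℝ and * denotes complex conjugation, for all k, l, m and all real u, v, y. -/
open Complex ComplexConjugate

theorem stmt_9 (M : ℕ) (a : ℝ)
    (p α β : ℕ → ℂ)
    (hp : ∀ i < 2 * M, p i ≠ 0)
    (ha : ∀ i < 2 * M, (a : ℂ) ^ 2 * p i ^ 2 ≠ 1)
    (hpair : ∀ r < M, p (2 * r + 1) = conj (p (2 * r)))
    (hαpair : ∀ r < M, α (2 * r + 1) = conj (α (2 * r)))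
    (hβpair : ∀ r < M, β (2 * r + 1) = -conj (β (2 * r)))
    (σ : ℤ → ℤ → ℤ → ℝ → ℝ → ℝ → ℂ)
    (hσ : ∀ (k l m : ℤ) (u v y : ℝ),
      σ k l m u v y = Matrix.det (Matrix.of fun i j : Fin (2 * M) =>
        α (i : ℕ) * p (i : ℕ) ^ (k + (j : ℕ))
            * ((1 : ℂ) - (a : ℂ) * p (i : ℕ)) ^ (-l)
            * ((1 : ℂ) + (a : ℂ) * p (i : ℕ)) ^ (-m)
            * Complex.exp ((u : ℂ) / (1 - (a : ℂ) * p (i : ℕ))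
                + (v : ℂ) / (1 + (a : ℂ) * p (i : ℕ)) + (y : ℂ) / p (i : ℕ))
        + β (i : ℕ) * (-p (i : ℕ)) ^ (k + (j : ℕ))
            * ((1 : ℂ) + (a : ℂ) * p (i : ℕ)) ^ (-l)
            * ((1 : ℂ) - (a : ℂ) * p (i : ℕ)) ^ (-m)
            * Complex.exp ((u : ℂ) / (1 + (a : ℂ) * p (i : ℕ))
                + (v : ℂ) / (1 - (a : ℂ) * p (i : ℕ)) - (y : ℂ) / p (i : ℕ)))) :
    ∀ (k l m : ℤ) (u v y : ℝ),
      σ (k + 1) l m u v y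
        = (((-1 : ℝ) ^ M * ∏ r ∈ Finset.range M, ‖p (2 * r)‖ ^ 2 : ℝ) : ℂ)
            * conj (σ k l m u v y) := by
  intro k l m u v y
  rw [hσ, hσ]
  -- the permutation swapping 2r ↔ 2r+1
  set e : Equiv.Perm (Fin (2 * M)) :=
    Equiv.permCongr (finProdFinEquiv.trans (finCongr (Nat.mul_comm M 2)))
      (Equiv.prodCongrRight fun _ : Fin M => Equiv.swap (0 : Fin 2) 1) with he
  have hsign : Equiv.Perm.sign e = (-1) ^ M := by
    rw [he, Equiv.Perm.sign_permCongr, Equiv.Perm.sign_prodCongrRight]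
    simp [Equiv.Perm.sign_swap (by decide : (0 : Fin 2) ≠ 1)]
  have heval : ∀ i : Fin (2 * M), ((e i : ℕ)) = 2 * ((i : ℕ) / 2) + (1 - (i : ℕ) % 2) := by
    intro i
    simp only [he, Equiv.permCongr_apply, Equiv.symm_trans_apply, Equiv.trans_apply,
      finCongr_symm, finCongr_apply, finProdFinEquiv_symm_apply, Equiv.prodCongrRight_apply,
      finProdFinEquiv_apply_val, Fin.coe_cast]
    have h2 : ((Fin.cast (Nat.mul_comm M 2).symm i).modNat : ℕ) = (i : ℕ) % 2 := by
      simp [Fin.coe_modNat]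
    have h1 : ((Fin.cast (Nat.mul_comm M 2).symm i).divNat : ℕ) = (i : ℕ) / 2 := by
      simp [Fin.coe_divNat]
    rcases Nat.mod_two_eq_zero_or_one (i : ℕ) with h | h
    · have : (Fin.cast (Nat.mul_comm M 2).symm i).modNat = 0 := by
        apply Fin.ext; rw [h2, h]; rfl
      rw [this, h1, h]
      simp [Equiv.swap_apply_left]
      omega
    · have : (Fin.cast (Nat.mul_comm M 2).symm i).modNat = 1 := by
        apply Fin.ext; rw [h2, h]; rfl
      rw [this, h1, h]
      simp [Equiv.swap_apply_right]
  have hconj : ∀ i : Fin (2 * M),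
      conj (p ((e i : ℕ))) = p ((i : ℕ)) ∧ conj (α ((e i : ℕ))) = α ((i : ℕ)) ∧
        conj (β ((e i : ℕ))) = -β ((i : ℕ)) := by
    intro i
    have hi := i.isLt
    rcases Nat.mod_two_eq_zero_or_one (i : ℕ) with h | h
    · have hiv : (i : ℕ) = 2 * ((i : ℕ) / 2) := by omega
      have hr : (i : ℕ) / 2 < M := by omega
      have hev : (e i : ℕ) = 2 * ((i : ℕ) / 2) + 1 := by rw [heval i]; omega
      refine ⟨?_, ?_, ?_⟩
      · rw [hev, hpair _ hr]
        conv_rhs => rw [hiv]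
        simp
      · rw [hev, hαpair _ hr]
        conv_rhs => rw [hiv]
        simp
      · rw [hev, hβpair _ hr]
        conv_rhs => rw [hiv]
        simp
    · have hiv : (i : ℕ) = 2 * ((i : ℕ) / 2) + 1 := by omega
      have hr : (i : ℕ) / 2 < M := by omega
      have hev : (e i : ℕ) = 2 * ((i : ℕ) / 2) := by rw [heval i]; omega
      refine ⟨?_, ?_, ?_⟩
      · rw [hev]
        conv_rhs => rw [hiv, hpair _ hr]
      · rw [hev]
        conv_rhs => rw [hiv, hαpair _ hr]
      · rw [hev]
        conv_rhs => rw [hiv, hβpair _ hr]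
        simp
  have hmat : (Matrix.of fun i j : Fin (2 * M) =>
        α (i : ℕ) * p (i : ℕ) ^ (k + 1 + (j : ℕ))
            * ((1 : ℂ) - (a : ℂ) * p (i : ℕ)) ^ (-l)
            * ((1 : ℂ) + (a : ℂ) * p (i : ℕ)) ^ (-m)
            * Complex.exp ((u : ℂ) / (1 - (a : ℂ) * p (i : ℕ))
                + (v : ℂ) / (1 + (a : ℂ) * p (i : ℕ)) + (y : ℂ) / p (i : ℕ))
        + β (i : ℕ) * (-p (i : ℕ)) ^ (k + 1 + (j : ℕ))
            * ((1 : ℂ) + (a : ℂ) * p (i : ℕ)) ^ (-l)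
            * ((1 : ℂ) - (a : ℂ) * p (i : ℕ)) ^ (-m)
            * Complex.exp ((u : ℂ) / (1 + (a : ℂ) * p (i : ℕ))
                + (v : ℂ) / (1 - (a : ℂ) * p (i : ℕ)) - (y : ℂ) / p (i : ℕ)))
      = Matrix.of (fun i j : Fin (2 * M) => p (i : ℕ) *
          (((Matrix.of fun i j : Fin (2 * M) =>
        α (i : ℕ) * p (i : ℕ) ^ (k + (j : ℕ))
            * ((1 : ℂ) - (a : ℂ) * p (i : ℕ)) ^ (-l)
            * ((1 : ℂ) + (a : ℂ) * p (i : ℕ)) ^ (-m)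
            * Complex.exp ((u : ℂ) / (1 - (a : ℂ) * p (i : ℕ))
                + (v : ℂ) / (1 + (a : ℂ) * p (i : ℕ)) + (y : ℂ) / p (i : ℕ))
        + β (i : ℕ) * (-p (i : ℕ)) ^ (k + (j : ℕ))
            * ((1 : ℂ) + (a : ℂ) * p (i : ℕ)) ^ (-l)
            * ((1 : ℂ) - (a : ℂ) * p (i : ℕ)) ^ (-m)
            * Complex.exp ((u : ℂ) / (1 + (a : ℂ) * p (i : ℕ))
                + (v : ℂ) / (1 - (a : ℂ) * p (i : ℕ)) - (y : ℂ) / p (i : ℕ))).map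
            (starRingEnd ℂ)).submatrix e id i j)) := by
    ext i j
    obtain ⟨hcp, hcα, hcβ⟩ := hconj i
    have hP : p ((i : ℕ)) ≠ 0 := hp _ i.isLt
    simp only [Matrix.of_apply, Matrix.map_apply, Matrix.submatrix_apply, id_eq,
      map_add, map_mul, map_zpow₀, map_neg, map_sub, map_one, map_div₀,
      ← Complex.exp_conj, Complex.conj_ofReal, hcp, hcα, hcβ]
    have h1 : (k + 1 + (j : ℕ) : ℤ) = (k + (j : ℕ)) + 1 := by ring
    rw [h1, zpow_add_one₀ hP, zpow_add_one₀ (neg_ne_zero.mpr hP)]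
    ring
  rw [hmat, Matrix.det_mul_column, Matrix.det_permute, hsign, RingHom.map_det, RingHom.mapMatrix_apply]
  have hprodp : (∏ i : Fin (2 * M), p ((i : ℕ)))
      = ((∏ r ∈ Finset.range M, ‖p (2 * r)‖ ^ 2 : ℝ) : ℂ) := by
    rw [Fin.prod_univ_eq_prod_range, Complex.ofReal_prod]
    have : ∀ n, n ≤ M → ∏ i ∈ Finset.range (2 * n), p i
        = ∏ r ∈ Finset.range n, ((‖p (2 * r)‖ ^ 2 : ℝ) : ℂ) := by
      intro n hn
      induction n with
      | zero => simp
      | succ n ih =>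
        have h2 : 2 * (n + 1) = 2 * n + 1 + 1 := by ring
        rw [h2, Finset.prod_range_succ, Finset.prod_range_succ, Finset.prod_range_succ,
          ih (by omega), mul_assoc, hpair n (by omega), Complex.mul_conj, Complex.sq_norm]
    exact this M le_rfl
  rw [hprodp]
  push_cast
  ring
end

section
/- Fix N ≥ 1, a complex constant a, and functions f_k^{(i)}(l) (i = 1,…,N; k, l ∈ ℤ) with values in ℂ satisfying the linear relation f_k^{(i)}(l) − f_k^{(i)}(l−1) = a·f_{k+1}^{(i)}(l) for all i, k, l. Define ρ^k_l := det(f_k^{(i)}(l−j+1))_{i,j=1,…,N}. Then ρ^{k−1}_l = a^{N−1}·det(G) where G is the N×N matrix with entries G_{ij} = f_k^{(i)}(l−j+1) for j = 1,…,N−1 and G_{iN} = f_{k−1}^{(i)}(l−N+1). -/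
theorem stmt_10 (N : ℕ) (hN : 1 ≤ N) (a : ℂ)
    (f : Fin N → ℤ → ℤ → ℂ)
    (hlin : ∀ (i : Fin N) (k l : ℤ), f i k l - f i k (l - 1) = a * f i (k + 1) l)
    (ρ : ℤ → ℤ → ℂ)
    (hρ : ∀ (k l : ℤ),
      ρ k l = Matrix.det (Matrix.of fun i j : Fin N => f i k (l - (j : ℕ)))) :
    ∀ (k l : ℤ),
      ρ (k - 1) l = a ^ (N - 1) *
        Matrix.det (Matrix.of fun i j : Fin N =>
          if (j : ℕ) = N - 1 then f i (k - 1) (l - (N - 1)) else f i k (l - (j : ℕ))) := by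
  intro k l
  set M : ℕ → Matrix (Fin N) (Fin N) ℂ := fun m => Matrix.of fun i j =>
    if (j : ℕ) < m then a * f i k (l - (j : ℕ)) else f i (k - 1) (l - (j : ℕ)) with hM
  have key : ∀ m, m ≤ N - 1 → (M 0).det = (M m).det := by
    intro m hm
    induction m with
    | zero => rfl
    | succ m ih =>
      rw [ih (Nat.le_of_succ_le hm)]
      have hm1 : m + 1 < N := by omega
      have hm0 : m < N := by omega
      have hne : (⟨m, hm0⟩ : Fin N) ≠ ⟨m + 1, hm1⟩ := by
        simp [Fin.ext_iff]
      have := Matrix.det_updateCol_add_smul_self (M m) hne (-1 : ℂ)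
      rw [← this]
      congr 1
      ext i j
      by_cases hj : j = (⟨m, hm0⟩ : Fin N)
      · subst hj
        rw [Matrix.updateCol_self]
        simp only [hM, Matrix.of_apply, smul_eq_mul, neg_one_mul]
        rw [if_pos (Nat.lt_succ_self m), if_neg (lt_irrefl m),
          if_neg (show ¬ m + 1 < m by omega)]
        have hrel := hlin i (k - 1) (l - (m : ℕ))
        rw [sub_add_cancel] at hrel
        push_cast
        rw [show l - ((m : ℤ) + 1) = l - (m : ℤ) - 1 from by ring]
        linear_combination hrel
      · rw [Matrix.updateCol_ne hj]
        simp only [hM, Matrix.of_apply]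
        have : ((j : ℕ) < m + 1) ↔ ((j : ℕ) < m) := by
          constructor
          · intro h
            rcases Nat.lt_succ_iff_lt_or_eq.mp h with h' | h'
            · exact h'
            · exact absurd (Fin.ext h' : j = ⟨m, hm0⟩) hj
          · omega
        rw [if_congr this rfl rfl]
  have h0 : ρ (k - 1) l = (M 0).det := by
    have hM0 : M 0 = Matrix.of fun i j : Fin N => f i (k - 1) (l - (j : ℕ)) := by
      ext i j
      simp [hM]
    rw [hρ, hM0]
  rw [h0, key (N - 1) le_rfl]
  have : M (N - 1) = Matrix.of fun i j : Fin N =>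
      (if (j : ℕ) = N - 1 then (1 : ℂ) else a) *
      (if (j : ℕ) = N - 1 then f i (k - 1) (l - (N - 1)) else f i k (l - (j : ℕ))) := by
    ext i j
    simp only [hM, Matrix.of_apply]
    by_cases hj : (j : ℕ) = N - 1
    · rw [if_neg (show ¬ (j : ℕ) < N - 1 by omega), if_pos hj, if_pos hj, one_mul, hj]
      congr 2
      omega
    · have : (j : ℕ) < N - 1 := by have := j.2; omega
      rw [if_pos this, if_neg hj, if_neg hj]
  rw [this]
  have := Matrix.det_mul_row (fun j : Fin N => if (j : ℕ) = N - 1 then (1 : ℂ) else a)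
    (Matrix.of fun i j : Fin N =>
      if (j : ℕ) = N - 1 then f i (k - 1) (l - (N - 1)) else f i k (l - (j : ℕ)))
  rw [show (Matrix.of fun i j : Fin N =>
      (if (j : ℕ) = N - 1 then (1 : ℂ) else a) *
      (if (j : ℕ) = N - 1 then f i (k - 1) (l - (N - 1)) else f i k (l - (j : ℕ)))) =
      (Matrix.of fun (i j : Fin N) =>
        (fun j : Fin N => if (j : ℕ) = N - 1 then (1 : ℂ) else a) j *
        (Matrix.of fun i j : Fin N =>
          if (j : ℕ) = N - 1 then f i (k - 1) (l - (N - 1)) else f i k (l - (j : ℕ))) i j)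
      from rfl, this]
  congr 1
  have hb : N - 1 < N := by omega
  have hprod : ∏ j : Fin N, (if (j : ℕ) = N - 1 then (1 : ℂ) else a) = a ^ (N - 1) := by
    rw [← Finset.mul_prod_erase Finset.univ _ (Finset.mem_univ (⟨N - 1, hb⟩ : Fin N)),
      if_pos rfl, one_mul,
      Finset.prod_congr rfl (fun j hj => if_neg (fun h =>
        (Finset.mem_erase.mp hj).1 (Fin.ext h))),
      Finset.prod_const, Finset.card_erase_of_mem (Finset.mem_univ _),
      Finset.card_univ, Fintype.card_fin]
  exact hprod
end

section
/- Let a ∈ ℂ and let σ^k_l = σ^k_l(u,y) (k, l ∈ ℤ) be complex-valued functions, twice continuously differentiable in (u,y) ∈ ℝ², satisfying for all k, l, u, y the two bilinear equations (bl5): (∂_u σ^{k−1}_l)σ^k_l − σ^{k−1}_l(∂_u σ^k_l) − σ^{k−1}_l σ^k_l = −σ^k_{l+1}σ^{k−1}_{l−1}, and (bl10): (∂_y σ^k_{l+1})σ^k_l − σ^k_{l+1}(∂_y σ^k_l) − a σ^k_{l+1}σ^k_l = −a σ^{k+1}_{l+1}σ^{k−1}_l. Define F^k_l := (∂_u∂_y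 σ^k_l)σ^k_l − (∂_u σ^k_l)(∂_y σ^k_l) − a(σ^k_l)² + a σ^{k+1}_{l+1}σ^{k−1}_{l−1}. Then F^k_l·(σ^{k−1}_l)² = F^{k−1}_l·(σ^k_l)² for all k, l, u, y. -/
noncomputable def Du (g : ℝ → ℝ → ℂ) (u y : ℝ) : ℂ :=
  fderiv ℝ (fun q : ℝ × ℝ => g q.1 q.2) (u, y) (1, 0)

noncomputable def Dyy (g : ℝ → ℝ → ℂ) (u y : ℝ) : ℂ :=
  fderiv ℝ (fun q : ℝ × ℝ => g q.1 q.2) (u, y) (0, 1)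

noncomputable def Duy (g : ℝ → ℝ → ℂ) (u y : ℝ) : ℂ :=
  fderiv ℝ (fun p : ℝ × ℝ => fderiv ℝ (fun q : ℝ × ℝ => g q.1 q.2) p (0, 1)) (u, y) (1, 0)

lemma hderiv_fst {f : ℝ × ℝ → ℂ} (hf : Differentiable ℝ f) (u y : ℝ) :
    HasDerivAt (fun u' => f (u', y)) (fderiv ℝ f (u, y) (1, 0)) u := by
  have hline : HasDerivAt (fun u' : ℝ => ((u' : ℝ), y)) ((1 : ℝ), (0 : ℝ)) u :=
    (hasDerivAt_id u).prodMk (hasDerivAt_const u y)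
  exact (hf (u, y)).hasFDerivAt.comp_hasDerivAt u hline

lemma hderiv_snd {f : ℝ × ℝ → ℂ} (hf : Differentiable ℝ f) (u y : ℝ) :
    HasDerivAt (fun y' => f (u, y')) (fderiv ℝ f (u, y) (0, 1)) y := by
  have hline : HasDerivAt (fun y' : ℝ => ((u : ℝ), y')) ((0 : ℝ), (1 : ℝ)) y :=
    (hasDerivAt_const y u).prodMk (hasDerivAt_id y)
  exact (hf (u, y)).hasFDerivAt.comp_hasDerivAt y hline

lemma contDiff_pderiv {f : ℝ × ℝ → ℂ} (hf : ContDiff ℝ 2 f) (v : ℝ × ℝ) :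
    ContDiff ℝ 1 (fun p => fderiv ℝ f p v) :=
  (hf.fderiv_right (by norm_num)).clm_apply contDiff_const

lemma symm2 {f : ℝ × ℝ → ℂ} (hf : ContDiff ℝ 2 f) (p : ℝ × ℝ) (v w : ℝ × ℝ) :
    fderiv ℝ (fun q => fderiv ℝ f q v) p w = fderiv ℝ (fun q => fderiv ℝ f q w) p v := by
  have hdf : Differentiable ℝ (fderiv ℝ f) :=
    (hf.fderiv_right (m := 1) (by norm_num)).differentiable one_ne_zero
  have key : ∀ z : ℝ × ℝ, fderiv ℝ (fun q => fderiv ℝ f q z) p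
      = (fderiv ℝ (fderiv ℝ f) p).flip z := by
    intro z
    have := fderiv_clm_apply (hdf p) (differentiableAt_const z)
    simpa using this
  rw [key v, key w]
  have hsymm := second_derivative_symmetric (f := f) (f' := fderiv ℝ f)
    (f'' := fderiv ℝ (fderiv ℝ f) p)
    (fun z => ((hf.differentiable two_ne_zero) z).hasFDerivAt) (hdf p).hasFDerivAt
  simpa using hsymm w v

lemma L1 {g : ℝ → ℝ → ℂ} (hg : ContDiff ℝ 2 (fun q : ℝ × ℝ => g q.1 q.2)) (u y : ℝ) :
    HasDerivAt (fun u' => g u' y) (Du g u y) u :=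
  hderiv_fst (hg.differentiable two_ne_zero) u y

lemma L2 {g : ℝ → ℝ → ℂ} (hg : ContDiff ℝ 2 (fun q : ℝ × ℝ => g q.1 q.2)) (u y : ℝ) :
    HasDerivAt (fun y' => g u y') (Dyy g u y) y :=
  hderiv_snd (hg.differentiable two_ne_zero) u y

lemma L3 {g : ℝ → ℝ → ℂ} (hg : ContDiff ℝ 2 (fun q : ℝ × ℝ => g q.1 q.2)) (u y : ℝ) :
    HasDerivAt (fun y' => deriv (fun u' => g u' y') u) (Duy g u y) y := by
  have heq : (fun y' => deriv (fun u' => g u' y') u)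
      = fun y' => fderiv ℝ (fun q : ℝ × ℝ => g q.1 q.2) (u, y') (1, 0) := by
    funext y'
    exact (L1 hg u y').deriv
  rw [heq]
  have h := hderiv_snd ((contDiff_pderiv hg (1, 0)).differentiable one_ne_zero) u y
  rwa [symm2 hg (u, y) (1, 0) (0, 1)] at h

lemma L4 {g : ℝ → ℝ → ℂ} (hg : ContDiff ℝ 2 (fun q : ℝ × ℝ => g q.1 q.2)) (u y : ℝ) :
    deriv (fun u' => deriv (fun y' => g u' y') y) u = Duy g u y := by
  have heq : (fun u' => deriv (fun y' => g u' y') y)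
      = fun u' => fderiv ℝ (fun q : ℝ × ℝ => g q.1 q.2) (u', y) (0, 1) := by
    funext u'
    exact (L2 hg u' y).deriv
  rw [heq]
  exact (hderiv_fst ((contDiff_pderiv hg (0, 1)).differentiable one_ne_zero) u y).deriv

theorem stmt_12 (a : ℂ) (σ : ℤ → ℤ → ℝ → ℝ → ℂ)
    (hsmooth : ∀ (k l : ℤ), ContDiff ℝ 2 (fun q : ℝ × ℝ => σ k l q.1 q.2))
    (hbl5 : ∀ (k l : ℤ) (u y : ℝ),
      deriv (fun u' => σ (k - 1) l u' y) u * σ k l u y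
        - σ (k - 1) l u y * deriv (fun u' => σ k l u' y) u
        - σ (k - 1) l u y * σ k l u y
        = -(σ k (l + 1) u y * σ (k - 1) (l - 1) u y))
    (hbl10 : ∀ (k l : ℤ) (u y : ℝ),
      deriv (fun y' => σ k (l + 1) u y') y * σ k l u y
        - σ k (l + 1) u y * deriv (fun y' => σ k l u y') y
        - a * σ k (l + 1) u y * σ k l u y
        = -a * σ (k + 1) (l + 1) u y * σ (k - 1) l u y)
    (F : ℤ → ℤ → ℝ → ℝ → ℂ)
    (hF : ∀ (k l : ℤ) (u y : ℝ),
      F k l u y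
        = deriv (fun u' => deriv (fun y' => σ k l u' y') y) u * σ k l u y
          - deriv (fun u' => σ k l u' y) u * deriv (fun y' => σ k l u y') y
          - a * (σ k l u y) ^ 2
          + a * σ (k + 1) (l + 1) u y * σ (k - 1) (l - 1) u y) :
    ∀ (k l : ℤ) (u y : ℝ),
      F k l u y * (σ (k - 1) l u y) ^ 2 = F (k - 1) l u y * (σ k l u y) ^ 2 := by
  intro k l u y
  -- E1 : bl5 at (k, l, u, y) expressed with Du
  have E1 : Du (σ (k - 1) l) u y * σ k l u y - σ (k - 1) l u y * Du (σ k l) u y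
      - σ (k - 1) l u y * σ k l u y = -(σ k (l + 1) u y * σ (k - 1) (l - 1) u y) := by
    have h := hbl5 k l u y
    rwa [(L1 (hsmooth (k - 1) l) u y).deriv, (L1 (hsmooth k l) u y).deriv] at h
  -- E2 : y-derivative of bl5
  have h1 : HasDerivAt
      (fun y' => deriv (fun u' => σ (k - 1) l u' y') u * σ k l u y'
        - σ (k - 1) l u y' * deriv (fun u' => σ k l u' y') u
        - σ (k - 1) l u y' * σ k l u y')
      ((Duy (σ (k - 1) l) u y * σ k l u y + deriv (fun u' => σ (k - 1) l u' y) u * Dyy (σ k l) u y)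
        - (Dyy (σ (k - 1) l) u y * deriv (fun u' => σ k l u' y) u + σ (k - 1) l u y * Duy (σ k l) u y)
        - (Dyy (σ (k - 1) l) u y * σ k l u y + σ (k - 1) l u y * Dyy (σ k l) u y)) y := by
    exact (((L3 (hsmooth (k - 1) l) u y).mul (L2 (hsmooth k l) u y)).sub
      ((L2 (hsmooth (k - 1) l) u y).mul (L3 (hsmooth k l) u y))).sub
      ((L2 (hsmooth (k - 1) l) u y).mul (L2 (hsmooth k l) u y))
  have h2 : HasDerivAt
      (fun y' => -(σ k (l + 1) u y' * σ (k - 1) (l - 1) u y'))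
      (-(Dyy (σ k (l + 1)) u y * σ (k - 1) (l - 1) u y
        + σ k (l + 1) u y * Dyy (σ (k - 1) (l - 1)) u y)) y :=
    ((L2 (hsmooth k (l + 1)) u y).mul (L2 (hsmooth (k - 1) (l - 1)) u y)).neg
  have hfun : (fun y' => deriv (fun u' => σ (k - 1) l u' y') u * σ k l u y'
        - σ (k - 1) l u y' * deriv (fun u' => σ k l u' y') u
        - σ (k - 1) l u y' * σ k l u y')
      = fun y' => -(σ k (l + 1) u y' * σ (k - 1) (l - 1) u y') :=
    funext fun y' => hbl5 k l u y'
  rw [hfun] at h1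
  have E2 := h1.unique h2
  rw [(L1 (hsmooth (k - 1) l) u y).deriv, (L1 (hsmooth k l) u y).deriv] at E2
  -- E3 : bl10 at (k, l)
  have E3 : Dyy (σ k (l + 1)) u y * σ k l u y - σ k (l + 1) u y * Dyy (σ k l) u y
      - a * σ k (l + 1) u y * σ k l u y
      = -a * σ (k + 1) (l + 1) u y * σ (k - 1) l u y := by
    have h := hbl10 k l u y
    rwa [(L2 (hsmooth k (l + 1)) u y).deriv, (L2 (hsmooth k l) u y).deriv] at h
  -- E4 : bl10 at (k - 1, l - 1)
  have E4 : Dyy (σ (k - 1) l) u y * σ (k - 1) (l - 1) u y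
      - σ (k - 1) l u y * Dyy (σ (k - 1) (l - 1)) u y
      - a * σ (k - 1) l u y * σ (k - 1) (l - 1) u y
      = -a * σ k l u y * σ (k - 1 - 1) (l - 1) u y := by
    have h := hbl10 (k - 1) (l - 1) u y
    simp only [show l - 1 + 1 = l from by ring, show k - 1 + 1 = k from by ring] at h
    rwa [(L2 (hsmooth (k - 1) l) u y).deriv, (L2 (hsmooth (k - 1) (l - 1)) u y).deriv] at h
  rw [hF k l u y, hF (k - 1) l u y]
  simp only [show k - 1 + 1 = k from by ring]
  rw [L4 (hsmooth k l) u y, L4 (hsmooth (k - 1) l) u y,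
    (L1 (hsmooth k l) u y).deriv, (L1 (hsmooth (k - 1) l) u y).deriv,
    (L2 (hsmooth k l) u y).deriv, (L2 (hsmooth (k - 1) l) u y).deriv]
  linear_combination
    (Dyy (σ (k - 1) l) u y * σ k l u y + Dyy (σ k l) u y * σ (k - 1) l u y) * E1
    - σ (k - 1) l u y * σ k l u y * E2
    + σ (k - 1) l u y * σ (k - 1) (l - 1) u y * E3
    - σ k l u y * σ k (l + 1) u y * E4
end

section
/- Let ε ≠ 0 and λ ≠ 0 be real constants. Let θ_l(s) and θ̃_l(s) (l ∈ ℤ) be real-valued smooth functions of s ∈ ℝ such that θ solves the semi-discrete potential mKdV equation dθ_l/ds = (2/ε)tan((θ_{l+1} − θ_{l−1})/4), and such that for all l and s: (BT1) (1/λ − ε)·tan((θ̃_{l+1} − θ_l)/4) = (1/λ + ε)·tan((θ̃_l − θ_{l+1})/4), and (BT2) (1/λ + ε)·(dθ̃_l/ds)/(4 cos²((θ̃_l − θ_{l+1})/4)) + (1/λ − ε)·(dθ_l/ds)/(4 cos²((θ̃_{l+1} − θ_l)/4)) = tan((θ̃_l − θ_{l+1})/4) + tan((θ̃_{l+1} −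 θ_l)/4), where cos((θ̃_l − θ_{l+1})/4) ≠ 0, cos((θ̃_{l+1} − θ_l)/4) ≠ 0, and cos((θ_{l+1} − θ_{l−1})/4) ≠ 0, cos((θ̃_{l+1} − θ̃_{l−1})/4) ≠ 0 for all l, s. Then θ̃ also solves the semi-discrete potential mKdV equation: dθ̃_l/ds = (2/ε)tan((θ̃_{l+1} − θ̃_{l−1})/4) for all l, s. -/
open Real

private lemma tan_sub' (x y : ℝ) (hx : Real.cos x ≠ 0) (hy : Real.cos y ≠ 0)
    (hxy : Real.cos (x - y) ≠ 0) :
    Real.tan (x - y) * (1 + Real.tan x * Real.tan y) = Real.tan x - Real.tan y := by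
  rw [Real.cos_sub] at hxy
  rw [Real.tan_eq_sin_div_cos, Real.tan_eq_sin_div_cos, Real.tan_eq_sin_div_cos,
    Real.sin_sub, Real.cos_sub]
  field_simp
  have hxy' : Real.cos y * Real.cos x + Real.sin x * Real.sin y ≠ 0 := by
    rwa [mul_comm (Real.cos y)]
  rw [mul_div_assoc, div_self hxy', mul_one]

private lemma one_add_tan_mul_tan_ne (x y : ℝ) (hx : Real.cos x ≠ 0) (hy : Real.cos y ≠ 0)
    (hxy : Real.cos (x - y) ≠ 0) : 1 + Real.tan x * Real.tan y ≠ 0 := by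
  rw [Real.cos_sub] at hxy
  intro h
  apply hxy
  rw [Real.tan_eq_sin_div_cos, Real.tan_eq_sin_div_cos] at h
  field_simp at h
  linarith

private lemma one_add_tan_sq (x : ℝ) (hx : Real.cos x ≠ 0) :
    1 + Real.tan x ^ 2 = 1 / Real.cos x ^ 2 := by
  rw [Real.tan_eq_sin_div_cos]
  field_simp
  exact Real.cos_sq_add_sin_sq x

private lemma alg_key (a b e T A B C D W V : ℝ) (he : e ≠ 0)
    (h5 : b - a = 2 * e)
    (h1 : a * A = b * B) (h2 : a * C = b * D)
    (h3 : W * (1 + A * D) = A - D) (h4 : V * (1 + C * B) = C - B)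
    (hAD : 1 + A * D ≠ 0) (hCB : 1 + C * B ≠ 0)
    (hE : a * e * T * (1 + A ^ 2) + 2 * b * W * (1 + B ^ 2) = 4 * e * (A + B))
    (hC : b * e * T * (1 + D ^ 2) + 2 * a * W * (1 + C ^ 2) = 4 * e * (C + D)) :
    e * T = 2 * V := by
  have hab : a ^ 2 + b ^ 2 ≠ 0 := by
    intro h
    have ha : a = 0 := by nlinarith [sq_nonneg a, sq_nonneg b]
    have hb : b = 0 := by nlinarith [sq_nonneg a, sq_nonneg b]
    apply he; rw [ha, hb] at h5; linarith
  have key : (e * T - 2 * V) *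
      ((1 + A ^ 2) * (1 + D ^ 2) * (a ^ 2 + b ^ 2) * (1 + A * D) * (1 + C * B)) = 0 := by
    linear_combination
      ((1+A*D)*(1+C*B)*a*(1+D^2)) * hE
      + ((1+A*D)*(1+C*B)*b*(1+A^2)) * hC
      + (-2*a*b*((1+D^2)*(1+B^2)+(1+A^2)*(1+C^2))*(1+C*B)) * h3
      + (-2*(a*(1+D^2)*(A+B)+b*(1+A^2)*(C+D))*(1+A*D)*(1+C*B)) * h5
      + (-2*(1+A*D)*(1+A^2)*(1+D^2)*(a^2+b^2)) * h4
      + (-2*b + -2*b*D^2 + -2*b*C*D + -2*b*C^2 + -2*b*A*D + -2*b*A*D^3 + -2*b*A*C*D^2 + -2*b*A*C^2*D + -2*b*A^2 + -2*b*A^2*D^2 + -2*b*A^2*C*D + -2*b*A^2*C^2 + -2*b*A^3*D + -2*b*A^3*D^3 + -2*b*A^3*C*D^2 + -2*b*A^3*C^2*D + -2*a + -2*a*D^2 + -2*a*C*D + -2*a*C*D^3 + 2*a*C^2 + -2*a*C^3*D + -2*a*B*C + -2*a*B*C*D^2 + -2*a*B^2*C*D + -2*a*B^2*C*D^3 + -2*a*A*D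 + -2*a*A*D^3 + 2*a*A*C + 2*a*A*C*D^2 + 2*a*A*C^2*D + 2*a*A*C^3 + 2*a*A*B + 2*a*A*B*D^2 + -2*a*A*B*C*D + -2*a*A*B*C*D^3 + 2*a*A*B^2*C + 2*a*A*B^2*C*D^2 + -2*a*A^2*C*D + -2*a*A^2*C*D^3 + 2*a*A^2*C^2 + -2*a*A^2*C^3*D + 2*a*A^2*B*D + 2*a*A^2*B*D^3 + 2*a*A^3*C + 2*a*A^3*C*D^2 + 2*a*A^3*C^2*D + 2*a*A^3*C^3) * h1
      + (-2*b + 2*b*C*D + -2*b*A*D + 2*b*A*C*D^2 + -2*b*A^2 + 2*b*A^2*C*D + -2*b*A^3*D + 2*b*A^3*C*D^2 + -2*a + -2*a*D^2 + -2*a*B^2 + -2*a*B^2*D^2 + -2*a*A*C + 2*a*A*C^2*D + -4*a*A^2 + -4*a*A^2*D^2 + -2*a*A^2*C*D + -2*a*A^2*C^2 + -2*a*A^2*B^2 + -2*a*A^2*B^2*D^2 + -2*a*A^3*C + 2*a*A^3*C^2*D + -2*a*A^4 + -2*a*A^4*D^2 + -2*a*A^4*C*D + -2*a*A^4*C^2)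 * h2
  have hfac : ((1 + A ^ 2) * (1 + D ^ 2) * (a ^ 2 + b ^ 2) * (1 + A * D) * (1 + C * B)) ≠ 0 := by
    have p1 : (1:ℝ) + A ^ 2 ≠ 0 := by positivity
    have p2 : (1:ℝ) + D ^ 2 ≠ 0 := by positivity
    exact mul_ne_zero (mul_ne_zero (mul_ne_zero (mul_ne_zero p1 p2) hab) hAD) hCB
  rcases mul_eq_zero.mp key with h | h
  · linarith
  · exact absurd h hfac

private lemma step2 (eps al be pa pb pc pd T P Q R : ℝ)
    (heps : eps ≠ 0) (h5 : be - al = 2 * eps)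
    (ca : Real.cos pa ≠ 0) (cb : Real.cos pb ≠ 0)
    (cc : Real.cos pc ≠ 0) (cd : Real.cos pd ≠ 0)
    (cad : Real.cos (pa - pd) ≠ 0) (ccb : Real.cos (pc - pb) ≠ 0)
    (h1 : al * Real.tan pa = be * Real.tan pb)
    (h2 : al * Real.tan pc = be * Real.tan pd)
    (hR : R = 2 / eps * Real.tan (pa - pd))
    (e1 : be * Q / (4 * Real.cos pb ^ 2) + al * P / (4 * Real.cos pa ^ 2)
      = Real.tan pb + Real.tan pa)
    (e2 : al * (1 / Real.cos pa ^ 2 * ((T - P) / 4))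
      = be * (1 / Real.cos pb ^ 2 * ((Q - R) / 4)))
    (e5 : be * T / (4 * Real.cos pd ^ 2) + al * R / (4 * Real.cos pc ^ 2)
      = Real.tan pd + Real.tan pc) :
    T = 2 / eps * Real.tan (pc - pb) := by
  have h3 := tan_sub' pa pd ca cd cad
  have h4 := tan_sub' pc pb cc cb ccb
  have hAD := one_add_tan_mul_tan_ne pa pd ca cd cad
  have hCB := one_add_tan_mul_tan_ne pc pb cc cb ccb
  have hA := one_add_tan_sq pa ca
  have hB := one_add_tan_sq pb cb
  have hCq := one_add_tan_sq pc cc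
  have hD := one_add_tan_sq pd cd
  have hR' : eps * R = 2 * Real.tan (pa - pd) := by
    rw [hR]; field_simp
  have e4 : al * T * (1 + Real.tan pa ^ 2) + be * R * (1 + Real.tan pb ^ 2)
      = 4 * (Real.tan pa + Real.tan pb) := by
    linear_combination 4 * e1 + 4 * e2 + (al * T) * hA + (be * R) * hB
  have hE : al * eps * T * (1 + Real.tan pa ^ 2)
      + 2 * be * Real.tan (pa - pd) * (1 + Real.tan pb ^ 2)
      = 4 * eps * (Real.tan pa + Real.tan pb) := by
    linear_combination eps * e4 - be * (1 + Real.tan pb ^ 2) * hR'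
  have e6 : be * T * (1 + Real.tan pd ^ 2) + al * R * (1 + Real.tan pc ^ 2)
      = 4 * (Real.tan pc + Real.tan pd) := by
    linear_combination 4 * e5 + (be * T) * hD + (al * R) * hCq
  have hC : be * eps * T * (1 + Real.tan pd ^ 2)
      + 2 * al * Real.tan (pa - pd) * (1 + Real.tan pc ^ 2)
      = 4 * eps * (Real.tan pc + Real.tan pd) := by
    linear_combination eps * e6 - al * (1 + Real.tan pc ^ 2) * hR'
  have hfin := alg_key al be eps T (Real.tan pa) (Real.tan pb) (Real.tan pc) (Real.tan pd)
    (Real.tan (pa - pd)) (Real.tan (pc - pb)) heps h5 h1 h2 h3 h4 hAD hCB hE hC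
  field_simp
  linear_combination hfin

theorem stmt_13 (ε lam : ℝ) (hε : ε ≠ 0) (hlam : lam ≠ 0)
    (θ θt : ℤ → ℝ → ℝ)
    (hθsmooth : ∀ l : ℤ, ContDiff ℝ (⊤ : ℕ∞) (θ l))
    (hθtsmooth : ∀ l : ℤ, ContDiff ℝ (⊤ : ℕ∞) (θt l))
    (hmkdv : ∀ (l : ℤ) (s : ℝ),
      deriv (θ l) s = (2 / ε) * Real.tan ((θ (l + 1) s - θ (l - 1) s) / 4))
    (hBT1 : ∀ (l : ℤ) (s : ℝ),
      (1 / lam - ε) * Real.tan ((θt (l + 1) s - θ l s) / 4)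
        = (1 / lam + ε) * Real.tan ((θt l s - θ (l + 1) s) / 4))
    (hBT2 : ∀ (l : ℤ) (s : ℝ),
      (1 / lam + ε) * deriv (θt l) s / (4 * Real.cos ((θt l s - θ (l + 1) s) / 4) ^ 2)
        + (1 / lam - ε) * deriv (θ l) s / (4 * Real.cos ((θt (l + 1) s - θ l s) / 4) ^ 2)
        = Real.tan ((θt l s - θ (l + 1) s) / 4)
          + Real.tan ((θt (l + 1) s - θ l s) / 4))
    (hc1 : ∀ (l : ℤ) (s : ℝ), Real.cos ((θt l s - θ (l + 1) s) / 4) ≠ 0)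
    (hc2 : ∀ (l : ℤ) (s : ℝ), Real.cos ((θt (l + 1) s - θ l s) / 4) ≠ 0)
    (hc3 : ∀ (l : ℤ) (s : ℝ), Real.cos ((θ (l + 1) s - θ (l - 1) s) / 4) ≠ 0)
    (hc4 : ∀ (l : ℤ) (s : ℝ), Real.cos ((θt (l + 1) s - θt (l - 1) s) / 4) ≠ 0) :
    ∀ (l : ℤ) (s : ℝ),
      deriv (θt l) s = (2 / ε) * Real.tan ((θt (l + 1) s - θt (l - 1) s) / 4) := by
  intro l s
  have hll : l - 1 + 1 = l := by ring
  -- cosine nonvanishing at the relevant angles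
  have ca : Real.cos ((θt l s - θ (l - 1) s) / 4) ≠ 0 := by
    have := hc2 (l - 1) s; rw [hll] at this; exact this
  have cb : Real.cos ((θt (l - 1) s - θ l s) / 4) ≠ 0 := by
    have := hc1 (l - 1) s; rw [hll] at this; exact this
  have cc : Real.cos ((θt (l + 1) s - θ l s) / 4) ≠ 0 := hc2 l s
  have cd : Real.cos ((θt l s - θ (l + 1) s) / 4) ≠ 0 := hc1 l s
  have cad : Real.cos ((θt l s - θ (l - 1) s) / 4 - (θt l s - θ (l + 1) s) / 4) ≠ 0 := by
    have := hc3 l s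
    rw [show (θ (l + 1) s - θ (l - 1) s) / 4
      = (θt l s - θ (l - 1) s) / 4 - (θt l s - θ (l + 1) s) / 4 from by ring] at this
    exact this
  have ccb : Real.cos ((θt (l + 1) s - θ l s) / 4 - (θt (l - 1) s - θ l s) / 4) ≠ 0 := by
    have := hc4 l s
    rw [show (θt (l + 1) s - θt (l - 1) s) / 4
      = (θt (l + 1) s - θ l s) / 4 - (θt (l - 1) s - θ l s) / 4 from by ring] at this
    exact this
  -- BT1 relations
  have h1 : (1 / lam - ε) * Real.tan ((θt l s - θ (l - 1) s) / 4)
      = (1 / lam + ε) * Real.tan ((θt (l - 1) s - θ l s) / 4) := by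
    have := hBT1 (l - 1) s; rw [hll] at this; exact this
  have h2 := hBT1 l s
  -- mkdv for θ at l
  have hR : deriv (θ l) s
      = 2 / ε * Real.tan ((θt l s - θ (l - 1) s) / 4 - (θt l s - θ (l + 1) s) / 4) := by
    have := hmkdv l s
    rw [show (θ (l + 1) s - θ (l - 1) s) / 4
      = (θt l s - θ (l - 1) s) / 4 - (θt l s - θ (l + 1) s) / 4 from by ring] at this
    exact this
  -- BT2 instances
  have e1 : (1 / lam + ε) * deriv (θt (l - 1)) s
        / (4 * Real.cos ((θt (l - 1) s - θ l s) / 4) ^ 2)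
      + (1 / lam - ε) * deriv (θ (l - 1)) s
        / (4 * Real.cos ((θt l s - θ (l - 1) s) / 4) ^ 2)
      = Real.tan ((θt (l - 1) s - θ l s) / 4) + Real.tan ((θt l s - θ (l - 1) s) / 4) := by
    have := hBT2 (l - 1) s; rw [hll] at this; exact this
  have e5 := hBT2 l s
  -- differentiate BT1 at index l - 1
  have hdθt : HasDerivAt (θt l) (deriv (θt l) s) s :=
    (((hθtsmooth l).differentiable (by simp)) s).hasDerivAt
  have hdθtm : HasDerivAt (θt (l - 1)) (deriv (θt (l - 1)) s) s :=
    (((hθtsmooth (l - 1)).differentiable (by simp)) s).hasDerivAt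
  have hdθm : HasDerivAt (θ (l - 1)) (deriv (θ (l - 1)) s) s :=
    (((hθsmooth (l - 1)).differentiable (by simp)) s).hasDerivAt
  have hdθ : HasDerivAt (θ l) (deriv (θ l) s) s :=
    (((hθsmooth l).differentiable (by simp)) s).hasDerivAt
  have hinner1 : HasDerivAt (fun t => (θt l t - θ (l - 1) t) / 4)
      ((deriv (θt l) s - deriv (θ (l - 1)) s) / 4) s :=
    (hdθt.sub hdθm).div_const 4
  have hinner2 : HasDerivAt (fun t => (θt (l - 1) t - θ l t) / 4)
      ((deriv (θt (l - 1)) s - deriv (θ l) s) / 4) s :=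
    (hdθtm.sub hdθ).div_const 4
  have htan1 : HasDerivAt (fun t => Real.tan ((θt l t - θ (l - 1) t) / 4))
      (1 / Real.cos ((θt l s - θ (l - 1) s) / 4) ^ 2
        * ((deriv (θt l) s - deriv (θ (l - 1)) s) / 4)) s :=
    by have h := (Real.hasDerivAt_tan ca).comp s hinner1; exact h
  have htan2 : HasDerivAt (fun t => Real.tan ((θt (l - 1) t - θ l t) / 4))
      (1 / Real.cos ((θt (l - 1) s - θ l s) / 4) ^ 2
        * ((deriv (θt (l - 1)) s - deriv (θ l) s) / 4)) s :=
    by have h := (Real.hasDerivAt_tan cb).comp s hinner2; exact h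
  have hf : HasDerivAt (fun t => (1 / lam - ε) * Real.tan ((θt l t - θ (l - 1) t) / 4))
      ((1 / lam - ε) * (1 / Real.cos ((θt l s - θ (l - 1) s) / 4) ^ 2
        * ((deriv (θt l) s - deriv (θ (l - 1)) s) / 4))) s :=
    htan1.const_mul (1 / lam - ε)
  have hg : HasDerivAt (fun t => (1 / lam + ε) * Real.tan ((θt (l - 1) t - θ l t) / 4))
      ((1 / lam + ε) * (1 / Real.cos ((θt (l - 1) s - θ l s) / 4) ^ 2
        * ((deriv (θt (l - 1)) s - deriv (θ l) s) / 4))) s :=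
    htan2.const_mul (1 / lam + ε)
  have hfg : (fun t => (1 / lam - ε) * Real.tan ((θt l t - θ (l - 1) t) / 4))
      = (fun t => (1 / lam + ε) * Real.tan ((θt (l - 1) t - θ l t) / 4)) := by
    funext t
    have h := hBT1 (l - 1) t
    rw [hll] at h
    exact h
  have e2 : (1 / lam - ε) * (1 / Real.cos ((θt l s - θ (l - 1) s) / 4) ^ 2
        * ((deriv (θt l) s - deriv (θ (l - 1)) s) / 4))
      = (1 / lam + ε) * (1 / Real.cos ((θt (l - 1) s - θ l s) / 4) ^ 2
        * ((deriv (θt (l - 1)) s - deriv (θ l) s) / 4)) := by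
    rw [← hf.deriv, ← hg.deriv, hfg]
  -- apply the algebraic core
  rw [show (θt (l + 1) s - θt (l - 1) s) / 4
    = (θt (l + 1) s - θ l s) / 4 - (θt (l - 1) s - θ l s) / 4 from by ring]
  exact step2 ε (1 / lam - ε) (1 / lam + ε)
    ((θt l s - θ (l - 1) s) / 4) ((θt (l - 1) s - θ l s) / 4)
    ((θt (l + 1) s - θ l s) / 4) ((θt l s - θ (l + 1) s) / 4)
    (deriv (θt l) s) (deriv (θ (l - 1)) s) (deriv (θt (l - 1)) s) (deriv (θ l) s)
    hε (by ring) ca cb cc cd cad ccb h1 h2 hR e1 e2 e5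
end

section
/- Let ε ≠ 0 and λ ≠ 0 be real constants. Let γ_l(s) ∈ ℂ and θ_l(s) ∈ ℝ (l ∈ ℤ) be smooth in s ∈ ℝ and satisfy: (i) (γ_{l+1} − γ_l)/ε = exp(i(θ_{l+1} + θ_l)/2); (ii) dγ_l/ds = (1/cos(K_l/2))·exp(−i K_l/2)·(γ_{l+1} − γ_l)/ε where K_l = (θ_{l+1} − θ_{l−1})/2; and (iii) θ solves dθ_l/ds = (2/ε)tan((θ_{l+1} − θ_{l−1})/4). Let θ̃_l(s) be a Bäcklund transform of θ, i.e., a real smooth family satisfying (BT1) (1/λ − ε)·tan((θ̃_{l+1} − θ_l)/4) = (1/λ + ε)·tan((θ̃_l − θ_{l+1})/4) and (BT2) (1/λ + ε)·(dθ̃_l/ds)/(4 cos²((θ̃_l − θ_{l+1})/4)) + (1/λ − ε)·(dθ_l/ds)/(4 cos²((θ̃_{l+1} − θ_l)/4)) = tan((θ̃_l − θ_{l+1})/4) + tan((θ̃_{l+1} − θ_l)/4) for all l, s (with all the cosines appearing, including cos(K_l/2) and cos(K̃_l/2) with K̃_l = (θ̃_{l+1} − θ̃_{l−1})/2, nonzero).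 Define γ̃_l := γ_l + (1/λ)·exp(i(θ̃_l − θ_{l+1})/2)·(γ_{l+1} − γ_l)/ε. Then γ̃ is again a motion of a discrete curve with potential function θ̃: (γ̃_{l+1} − γ̃_l)/ε = exp(i(θ̃_{l+1} + θ̃_l)/2) and dγ̃_l/ds = (1/cos(K̃_l/2))·exp(−i K̃_l/2)·(γ̃_{l+1} − γ̃_l)/ε for all l, s. -/
open Complex

/- ## Helper lemmas -/

private lemma hexp (x : ℝ) :
    Complex.exp (Complex.I * (x:ℂ)) = (Real.cos x : ℂ) + (Real.sin x : ℂ) * Complex.I := by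
  rw [mul_comm, Complex.exp_mul_I, Complex.ofReal_cos, Complex.ofReal_sin]

private lemma expdiff (x y : ℝ) :
    Complex.exp (Complex.I * ((x+y:ℝ):ℂ)) - Complex.exp (Complex.I * ((x-y:ℝ):ℂ))
      = Complex.exp (Complex.I * (x:ℂ)) * (2 * Complex.I * (Real.sin y : ℂ)) := by
  rw [hexp, hexp, hexp, Real.cos_add, Real.sin_add, Real.cos_sub, Real.sin_sub]
  simp only [Complex.ofReal_sub, Complex.ofReal_add, Complex.ofReal_mul]
  linear_combination (-2*((Real.sin x:ℂ))*((Real.sin y:ℂ))) * Complex.I_sq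

private lemma oneSub (x : ℝ) (hx : Real.cos x ≠ 0) :
    (1 / (Real.cos x : ℂ)) * Complex.exp (-Complex.I * (x:ℂ)) = 1 - Complex.I * (Real.tan x : ℂ) := by
  have h : Complex.exp (-Complex.I * (x:ℂ)) = Complex.exp (Complex.I * ((-x:ℝ):ℂ)) := by
    push_cast; ring_nf
  have hcc : Complex.cos (x:ℂ) ≠ 0 := by rw [← Complex.ofReal_cos]; exact_mod_cast hx
  rw [h, hexp, Real.cos_neg, Real.sin_neg, Real.tan_eq_sin_div_cos]
  push_cast
  field_simp [hcc]
  ring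

private lemma m1lem (x y : ℝ) (hx : Real.cos x ≠ 0) (hy : Real.cos y ≠ 0) :
    (Real.tan x + Real.tan y) * (Real.cos x * Real.cos y) = Real.sin (x+y) := by
  simp only [Real.tan_eq_sin_div_cos]
  rw [Real.sin_add]
  field_simp

private lemma m2lem (x y : ℝ) (hx : Real.cos x ≠ 0) (hy : Real.cos y ≠ 0) :
    (1 + Real.tan x * Real.tan y) * (Real.cos x * Real.cos y) = Real.cos (x-y) := by
  simp only [Real.tan_eq_sin_div_cos]
  rw [Real.cos_sub]
  field_simp

private lemma m3lem (x y : ℝ) (hx : Real.cos x ≠ 0) (hy : Real.cos y ≠ 0) :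
    (Real.tan x - Real.tan y) * (Real.cos x * Real.cos y) = Real.sin (x-y) := by
  simp only [Real.tan_eq_sin_div_cos]
  rw [Real.sin_sub]
  field_simp

private lemma denne (x y : ℝ) (hx : Real.cos x ≠ 0) (hy : Real.cos y ≠ 0)
    (hxy : Real.cos (x-y) ≠ 0) : 1 + Real.tan x * Real.tan y ≠ 0 := by
  intro h
  have := m2lem x y hx hy
  rw [h, zero_mul] at this
  exact hxy this.symm

private lemma sinratio (x y : ℝ) (hx : Real.cos x ≠ 0) (hy : Real.cos y ≠ 0)
    (hxy : Real.cos (x-y) ≠ 0) :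
    Real.sin (x+y)/Real.cos (x-y) = (Real.tan x + Real.tan y)/(1 + Real.tan x * Real.tan y) := by
  rw [div_eq_div_iff hxy (denne x y hx hy hxy)]
  linear_combination (Real.tan x+Real.tan y)*(m2lem x y hx hy)
    - (1+Real.tan x*Real.tan y)*(m1lem x y hx hy)

private lemma tanratio (x y : ℝ) (hx : Real.cos x ≠ 0) (hy : Real.cos y ≠ 0)
    (hxy : Real.cos (x-y) ≠ 0) :
    Real.tan (x-y) = (Real.tan x - Real.tan y)/(1 + Real.tan x * Real.tan y) := by
  rw [Real.tan_eq_sin_div_cos, div_eq_div_iff hxy (denne x y hx hy hxy)]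
  linear_combination (Real.tan x-Real.tan y)*(m2lem x y hx hy)
    - (1+Real.tan x*Real.tan y)*(m3lem x y hx hy)

private lemma seclem (x : ℝ) (hx : Real.cos x ≠ 0) : Real.cos x ^ 2 * (1 + Real.tan x ^ 2) = 1 := by
  simp only [Real.tan_eq_sin_div_cos]
  field_simp
  exact Real.cos_sq_add_sin_sq x

private lemma keysin (lam ε a b : ℝ) (hlam : lam ≠ 0) (ha : Real.cos a ≠ 0) (hb : Real.cos b ≠ 0)
    (hBT : (1/lam - ε) * Real.tan a = (1/lam + ε) * Real.tan b) :
    Real.sin (a-b) = lam*ε*Real.sin (a+b) := by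
  have hBT' : (1 - lam*ε) * Real.tan a = (1 + lam*ε) * Real.tan b := by
    field_simp at hBT
    linear_combination hBT
  rw [Real.sin_sub, Real.sin_add]
  have hta : Real.sin a = Real.tan a * Real.cos a := by
    rw [Real.tan_eq_sin_div_cos]; field_simp
  have htb : Real.sin b = Real.tan b * Real.cos b := by
    rw [Real.tan_eq_sin_div_cos]; field_simp
  rw [hta, htb]
  linear_combination (Real.cos a * Real.cos b) * hBT'

private lemma hprodlem (p q A A' B B' : ℝ) (hpq : q - p ≠ 0)
    (H1 : p*A = q*B) (H2 : p*A' = q*B') : A'*B = A*B' := by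
  rcases eq_or_ne p 0 with hp | hp
  · have hq : q ≠ 0 := by intro h; apply hpq; rw [h, hp]; ring
    have hB : B = 0 := by
      have : q*B = 0 := by rw [← H1, hp, zero_mul]
      exact (mul_eq_zero.mp this).resolve_left hq
    have hB' : B' = 0 := by
      have : q*B' = 0 := by rw [← H2, hp, zero_mul]
      exact (mul_eq_zero.mp this).resolve_left hq
    rw [hB, hB']; ring
  · rcases eq_or_ne q 0 with hq | hq
    · have hA : A = 0 := by
        have : p*A = 0 := by rw [H1, hq, zero_mul]
        exact (mul_eq_zero.mp this).resolve_left hp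
      have hA' : A' = 0 := by
        have : p*A' = 0 := by rw [H2, hq, zero_mul]
        exact (mul_eq_zero.mp this).resolve_left hp
      rw [hA, hA']; ring
    · have h : (A'*B)*(p*q) = (A*B')*(p*q) := by
        linear_combination (q*B)*H2 - (q*B')*H1
      exact mul_right_cancel₀ (mul_ne_zero hp hq) h

private lemma keyR (a b a' b' : ℝ) (ha : Real.cos a ≠ 0) (hb : Real.cos b ≠ 0)
    (ha' : Real.cos a' ≠ 0) (hb' : Real.cos b' ≠ 0)
    (h1 : Real.cos (a'-b) ≠ 0) (h2 : Real.cos (a-b') ≠ 0)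
    (hprod : Real.tan a' * Real.tan b = Real.tan a * Real.tan b') :
    Real.cos (2*b) - Real.tan (a'-b) * Real.sin (2*b)
      = Real.cos (2*a) + Real.tan (a-b') * Real.sin (2*a) := by
  have e1 : Real.cos (a'+b) = Real.cos (2*b) * Real.cos (a'-b) - Real.sin (2*b) * Real.sin (a'-b) := by
    have h := Real.cos_add (2*b) (a'-b)
    rw [show 2*b+(a'-b) = a'+b by ring] at h; linarith
  have e2 : Real.cos (a+b') = Real.cos (2*a) * Real.cos (a-b') + Real.sin (2*a) * Real.sin (a-b') := by
    have h := Real.cos_sub (2*a) (a-b')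
    rw [show 2*a-(a-b') = a+b' by ring] at h; linarith
  have hprod' : Real.sin a' * Real.sin b * (Real.cos a * Real.cos b')
      = Real.sin a * Real.sin b' * (Real.cos a' * Real.cos b) := by
    simp only [Real.tan_eq_sin_div_cos] at hprod
    field_simp at hprod
    linear_combination hprod
  have key : Real.cos (a'+b) * Real.cos (a-b') = Real.cos (a+b') * Real.cos (a'-b) := by
    rw [Real.cos_add, Real.cos_sub, Real.cos_add, Real.cos_sub]
    linear_combination (-2:ℝ)*hprod'
  rw [Real.tan_eq_sin_div_cos, Real.tan_eq_sin_div_cos]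
  field_simp
  linear_combination key - Real.cos (a-b')*e1 + Real.cos (a'-b)*e2

private lemma alg (p q A A' B B' D D' : ℝ) (hq : q ≠ 0) (h1' : 1+A'*B ≠ 0) (h2' : 1+A*B' ≠ 0)
    (H1 : p*A = q*B) (H2 : p*A' = q*B')
    (hD2 : D*(q-p)*(1+A'*B) = 4*(A'-B))
    (hBT2' : q*D'*(1+B^2) + p*D*(1+A^2) = 4*(A+B)) :
    (D'+D)*(p+q) = 4*((A'+B)/(1+A'*B) + (A+B')/(1+A*B')) := by
  have s1 : q*(1+B^2) - p*(1+A^2) = (q-p)*(1-A*B) := by linear_combination (-(A+B))*H1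
  have s3 : q*(D'+D)*(1+B^2) = 4*(A+B) + D*(q-p)*(1-A*B) := by linear_combination hBT2' + D*s1
  have s5 : (q*(D'+D)*(1+A'*B))*(1+B^2) = (4*(A+A'))*(1+B^2) := by
    linear_combination (1+A'*B)*s3 + (1-A*B)*hD2
  have h1B : (1:ℝ)+B^2 ≠ 0 := by positivity
  have s6 : q*(D'+D)*(1+A'*B) = 4*(A+A') := mul_right_cancel₀ h1B s5
  have hqgoal : q*((D'+D)*(p+q)*((1+A'*B)*(1+A*B'))) = q*(4*((A'+B)*(1+A*B') + (A+B')*(1+A'*B))) := by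
    linear_combination ((p+q)*(1+A*B'))*s6 + 4*(1 + A*B' + A'*B' + A*A')*H1 + 4*(1-A^2)*H2
  have hfin := mul_left_cancel₀ hq hqgoal
  field_simp
  linear_combination hfin

private lemma comb (Rv av bv T T' E : ℝ)
    (hre : Real.cos (2*bv) - T*Real.sin (2*bv) = Real.cos (2*av) + T'*Real.sin (2*av))
    (him : E = (T*Real.cos (2*bv) + Real.sin (2*bv)) + (Real.sin (2*av) - T'*Real.cos (2*av))) :
    (1 - Complex.I*(T:ℂ)) * Complex.exp (Complex.I*((Rv - 2*bv :ℝ):ℂ))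
      + Complex.I*(E:ℂ)*Complex.exp (Complex.I*((Rv:ℝ):ℂ))
      = (1 - Complex.I*(T':ℂ)) * Complex.exp (Complex.I*((Rv + 2*av :ℝ):ℂ)) := by
  have e1 : Complex.exp (Complex.I*((Rv - 2*bv :ℝ):ℂ))
      = Complex.exp (Complex.I*((Rv:ℝ):ℂ)) * Complex.exp (Complex.I*((-(2*bv):ℝ):ℂ)) := by
    rw [← Complex.exp_add]; congr 1; push_cast; ring
  have e2 : Complex.exp (Complex.I*((Rv + 2*av :ℝ):ℂ))
      = Complex.exp (Complex.I*((Rv:ℝ):ℂ)) * Complex.exp (Complex.I*((2*av:ℝ):ℂ)) := by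
    rw [← Complex.exp_add]; congr 1; push_cast; ring
  rw [e1, e2, hexp (-(2*bv)), hexp (2*av), Real.cos_neg, Real.sin_neg]
  have hreC : ((Real.cos (2*bv):ℝ):ℂ) - (T:ℂ)*((Real.sin (2*bv):ℝ):ℂ)
      = ((Real.cos (2*av):ℝ):ℂ) + (T':ℂ)*((Real.sin (2*av):ℝ):ℂ) := by exact_mod_cast hre
  have himC : ((E:ℝ):ℂ) = ((T:ℝ):ℂ)*((Real.cos (2*bv):ℝ):ℂ) + ((Real.sin (2*bv):ℝ):ℂ)
      + (((Real.sin (2*av):ℝ):ℂ) - ((T':ℝ):ℂ)*((Real.cos (2*av):ℝ):ℂ)) := by exact_mod_cast him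
  set X := Complex.exp (Complex.I*((Rv:ℝ):ℂ))
  push_cast at hreC himC ⊢
  linear_combination X*hreC + Complex.I*X*himC
    + X*((T:ℂ)*(Complex.sin (2*(bv:ℂ))) + (T':ℂ)*(Complex.sin (2*(av:ℂ))))*Complex.I_sq

theorem stmt_15 (ε lam : ℝ) (hε : ε ≠ 0) (hlam : lam ≠ 0)
    (γ : ℤ → ℝ → ℂ) (θ θt : ℤ → ℝ → ℝ)
    (hγsmooth : ∀ l : ℤ, ContDiff ℝ (⊤ : ℕ∞) (γ l))
    (hθsmooth : ∀ l : ℤ, ContDiff ℝ (⊤ : ℕ∞) (θ l))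
    (hθtsmooth : ∀ l : ℤ, ContDiff ℝ (⊤ : ℕ∞) (θt l))
    (K Kt : ℤ → ℝ → ℝ)
    (hK : ∀ (l : ℤ) (s : ℝ), K l s = (θ (l + 1) s - θ (l - 1) s) / 2)
    (hKt : ∀ (l : ℤ) (s : ℝ), Kt l s = (θt (l + 1) s - θt (l - 1) s) / 2)
    (hseg : ∀ (l : ℤ) (s : ℝ), (γ (l + 1) s - γ l s) / (ε : ℂ)
      = Complex.exp (Complex.I * (((θ (l + 1) s + θ l s) / 2 : ℝ) : ℂ)))
    (hmotion : ∀ (l : ℤ) (s : ℝ), deriv (γ l) s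
      = (1 / (Real.cos (K l s / 2) : ℂ))
        * Complex.exp (-Complex.I * ((K l s / 2 : ℝ) : ℂ))
        * ((γ (l + 1) s - γ l s) / (ε : ℂ)))
    (hmkdv : ∀ (l : ℤ) (s : ℝ),
      deriv (θ l) s = (2 / ε) * Real.tan ((θ (l + 1) s - θ (l - 1) s) / 4))
    (hBT1 : ∀ (l : ℤ) (s : ℝ),
      (1 / lam - ε) * Real.tan ((θt (l + 1) s - θ l s) / 4)
        = (1 / lam + ε) * Real.tan ((θt l s - θ (l + 1) s) / 4))
    (hBT2 : ∀ (l : ℤ) (s : ℝ),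
      (1 / lam + ε) * deriv (θt l) s / (4 * Real.cos ((θt l s - θ (l + 1) s) / 4) ^ 2)
        + (1 / lam - ε) * deriv (θ l) s / (4 * Real.cos ((θt (l + 1) s - θ l s) / 4) ^ 2)
        = Real.tan ((θt l s - θ (l + 1) s) / 4)
          + Real.tan ((θt (l + 1) s - θ l s) / 4))
    (hc1 : ∀ (l : ℤ) (s : ℝ), Real.cos ((θt l s - θ (l + 1) s) / 4) ≠ 0)
    (hc2 : ∀ (l : ℤ) (s : ℝ), Real.cos ((θt (l + 1) s - θ l s) / 4) ≠ 0)
    (hc3 : ∀ (l : ℤ) (s : ℝ), Real.cos (K l s / 2) ≠ 0)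
    (hc4 : ∀ (l : ℤ) (s : ℝ), Real.cos (Kt l s / 2) ≠ 0)
    (γt : ℤ → ℝ → ℂ)
    (hγt : ∀ (l : ℤ) (s : ℝ), γt l s = γ l s
      + (1 / (lam : ℂ)) * Complex.exp (Complex.I * (((θt l s - θ (l + 1) s) / 2 : ℝ) : ℂ))
        * ((γ (l + 1) s - γ l s) / (ε : ℂ))) :
    ∀ (l : ℤ) (s : ℝ),
      ((γt (l + 1) s - γt l s) / (ε : ℂ)
        = Complex.exp (Complex.I * (((θt (l + 1) s + θt l s) / 2 : ℝ) : ℂ))) ∧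
      (deriv (γt l) s
        = (1 / (Real.cos (Kt l s / 2) : ℂ))
          * Complex.exp (-Complex.I * ((Kt l s / 2 : ℝ) : ℂ))
          * ((γt (l + 1) s - γt l s) / (ε : ℂ))) := by
  have hεC : (ε:ℂ) ≠ 0 := by exact_mod_cast hε
  have hlamC : (lam:ℂ) ≠ 0 := by exact_mod_cast hlam
  have hγt' : ∀ (m : ℤ) (s : ℝ), γt m s = γ m s
      + (1 / (lam : ℂ)) * Complex.exp (Complex.I * (((θt m s + θ m s)/2 : ℝ) : ℂ)) := by
    intro m s
    rw [hγt m s, hseg m s, mul_assoc, ← Complex.exp_add]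
    congr 2
    push_cast
    ring
  have part1 : ∀ (l : ℤ) (s : ℝ), (γt (l + 1) s - γt l s) / (ε : ℂ)
      = Complex.exp (Complex.I * (((θt (l + 1) s + θt l s) / 2 : ℝ) : ℂ)) := by
    intro l s
    have hs := keysin lam ε ((θt (l+1) s - θ l s)/4) ((θt l s - θ (l+1) s)/4) hlam
      (hc2 l s) (hc1 l s) (hBT1 l s)
    have ed1 := expdiff ((θt (l+1) s + θt l s + θ (l+1) s + θ l s)/4)
      ((θt (l+1) s - θ l s)/4 - (θt l s - θ (l+1) s)/4)
    have ed2 := expdiff ((θt (l+1) s + θt l s + θ (l+1) s + θ l s)/4)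
      ((θt (l+1) s - θ l s)/4 + (θt l s - θ (l+1) s)/4)
    have key2 : Complex.exp (Complex.I * (((θt (l+1) s + θ (l+1) s)/2 : ℝ):ℂ))
        - Complex.exp (Complex.I * (((θt l s + θ l s)/2 : ℝ):ℂ))
        = (lam:ℂ)*(ε:ℂ)*(Complex.exp (Complex.I * (((θt (l+1) s + θt l s)/2 : ℝ):ℂ))
          - Complex.exp (Complex.I * (((θ (l+1) s + θ l s)/2 : ℝ):ℂ))) := by
      rw [show (θt (l+1) s + θ (l+1) s)/2
            = (θt (l+1) s + θt l s + θ (l+1) s + θ l s)/4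
              + ((θt (l+1) s - θ l s)/4 - (θt l s - θ (l+1) s)/4) by ring,
          show (θt l s + θ l s)/2
            = (θt (l+1) s + θt l s + θ (l+1) s + θ l s)/4
              - ((θt (l+1) s - θ l s)/4 - (θt l s - θ (l+1) s)/4) by ring,
          show (θt (l+1) s + θt l s)/2
            = (θt (l+1) s + θt l s + θ (l+1) s + θ l s)/4
              + ((θt (l+1) s - θ l s)/4 + (θt l s - θ (l+1) s)/4) by ring,
          show (θ (l+1) s + θ l s)/2
            = (θt (l+1) s + θt l s + θ (l+1) s + θ l s)/4
              - ((θt (l+1) s - θ l s)/4 + (θt l s - θ (l+1) s)/4) by ring,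
          ed1, ed2, hs]
      push_cast
      ring
    have hsegl : γ (l+1) s - γ l s
        = (ε:ℂ) * Complex.exp (Complex.I * (((θ (l + 1) s + θ l s) / 2 : ℝ) : ℂ)) := by
      rw [← hseg l s]; field_simp
    rw [hγt' (l+1) s, hγt' l s, div_eq_iff hεC]
    rw [show γ (l+1) s + 1/(lam:ℂ) * Complex.exp (Complex.I * (((θt (l+1) s + θ (l+1) s)/2 : ℝ):ℂ))
        - (γ l s + 1/(lam:ℂ) * Complex.exp (Complex.I * (((θt l s + θ l s)/2 : ℝ):ℂ)))
        = (γ (l+1) s - γ l s) + 1/(lam:ℂ) * (Complex.exp (Complex.I * (((θt (l+1) s + θ (l+1) s)/2 : ℝ):ℂ))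
          - Complex.exp (Complex.I * (((θt l s + θ l s)/2 : ℝ):ℂ))) by ring,
       hsegl, key2]
    field_simp
    ring
  intro l s
  refine ⟨part1 l s, ?_⟩
  -- Part 2
  have ha : Real.cos ((θt (l+1) s - θ l s)/4) ≠ 0 := hc2 l s
  have hb : Real.cos ((θt l s - θ (l+1) s)/4) ≠ 0 := hc1 l s
  have ha' : Real.cos ((θt l s - θ (l-1) s)/4) ≠ 0 := by
    have := hc2 (l-1) s; rwa [show l-1+(1:ℤ) = l by ring] at this
  have hb' : Real.cos ((θt (l-1) s - θ l s)/4) ≠ 0 := by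
    have := hc1 (l-1) s; rwa [show l-1+(1:ℤ) = l by ring] at this
  have h1 : Real.cos ((θt l s - θ (l-1) s)/4 - (θt l s - θ (l+1) s)/4) ≠ 0 := by
    have := hc3 l s; rw [hK l s] at this
    rwa [show (θ (l+1) s - θ (l-1) s)/2/2
      = (θt l s - θ (l-1) s)/4 - (θt l s - θ (l+1) s)/4 by ring] at this
  have h2 : Real.cos ((θt (l+1) s - θ l s)/4 - (θt (l-1) s - θ l s)/4) ≠ 0 := by
    have := hc4 l s; rw [hKt l s] at this
    rwa [show (θt (l+1) s - θt (l-1) s)/2/2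
      = (θt (l+1) s - θ l s)/4 - (θt (l-1) s - θ l s)/4 by ring] at this
  have H1 := hBT1 l s
  have H2 : (1/lam - ε) * Real.tan ((θt l s - θ (l-1) s)/4)
      = (1/lam + ε) * Real.tan ((θt (l-1) s - θ l s)/4) := by
    have := hBT1 (l-1) s; rwa [show l-1+(1:ℤ) = l by ring] at this
  have hqp : (1/lam + ε) - (1/lam - ε) ≠ 0 := by
    intro h; apply hε; linarith
  have hprod := hprodlem (1/lam-ε) (1/lam+ε)
    (Real.tan ((θt (l+1) s - θ l s)/4)) (Real.tan ((θt l s - θ (l-1) s)/4))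
    (Real.tan ((θt l s - θ (l+1) s)/4)) (Real.tan ((θt (l-1) s - θ l s)/4))
    hqp H1 H2
  have hre := keyR ((θt (l+1) s - θ l s)/4) ((θt l s - θ (l+1) s)/4)
    ((θt l s - θ (l-1) s)/4) ((θt (l-1) s - θ l s)/4) ha hb ha' hb' h1 h2 hprod
  -- the imaginary-part identity
  have him : (deriv (θt l) s + deriv (θ l) s)/(2*lam)
      = Real.sin ((θt l s - θ (l-1) s)/4 + (θt l s - θ (l+1) s)/4)
          / Real.cos ((θt l s - θ (l-1) s)/4 - (θt l s - θ (l+1) s)/4)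
        + Real.sin ((θt (l+1) s - θ l s)/4 + (θt (l-1) s - θ l s)/4)
          / Real.cos ((θt (l+1) s - θ l s)/4 - (θt (l-1) s - θ l s)/4) := by
    rw [sinratio _ _ ha' hb h1, sinratio _ _ ha hb' h2]
    rcases eq_or_ne (1/lam + ε) 0 with hq0 | hq0
    · -- degenerate case
      have hp0 : 1/lam - ε ≠ 0 := by intro h; apply hε; linarith
      have htanz : ∀ (m : ℤ) (u : ℝ), Real.tan ((θt (m+1) u - θ m u)/4) = 0 := by
        intro m u
        have hb1 := hBT1 m u
        rw [hq0, zero_mul] at hb1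
        exact (mul_eq_zero.mp hb1).resolve_left hp0
      have hsin0 : ∀ (m : ℤ) (u : ℝ), Real.sin ((θt (m+1) u - θ m u)/4) = 0 := by
        intro m u
        have h := htanz m u
        rw [Real.tan_eq_sin_div_cos, div_eq_zero_iff] at h
        exact h.resolve_right (hc2 m u)
      have hta : Real.tan ((θt (l+1) s - θ l s)/4) = 0 := htanz l s
      have hta' : Real.tan ((θt l s - θ (l-1) s)/4) = 0 := by
        have := htanz (l-1) s; rwa [show l-1+(1:ℤ) = l by ring] at this
      -- deriv (θt l) = deriv (θ (l-1)) at s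
      have hDt : deriv (θt l) s = deriv (θ (l-1)) s := by
        have hgd : HasDerivAt (fun u => (θt l u - θ (l-1) u)/4)
            ((deriv (θt l) s - deriv (θ (l-1)) s)/4) s :=
          (((((hθtsmooth l).differentiable (by simp)).differentiableAt).hasDerivAt).sub
            ((((hθsmooth (l-1)).differentiable (by simp)).differentiableAt).hasDerivAt)).div_const 4
        have h0 : HasDerivAt (fun u => Real.sin ((θt l u - θ (l-1) u)/4))
            (Real.cos ((θt l s - θ (l-1) s)/4) * ((deriv (θt l) s - deriv (θ (l-1)) s)/4)) s :=
          hgd.sin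
        have hsinf : (fun u => Real.sin ((θt l u - θ (l-1) u)/4)) = fun _ => (0:ℝ) := by
          funext u
          have := hsin0 (l-1) u; rwa [show l-1+(1:ℤ) = l by ring] at this
        rw [hsinf] at h0
        have h00 : Real.cos ((θt l s - θ (l-1) s)/4)
            * ((deriv (θt l) s - deriv (θ (l-1)) s)/4) = 0 :=
          h0.unique (hasDerivAt_const s 0)
        have := (mul_eq_zero.mp h00).resolve_left ha'
        linarith
      have hca'' : Real.cos ((θt (l-1) s - θ (l-2) s)/4) ≠ 0 := by
        have := hc2 (l-2) s; rwa [show l-2+(1:ℤ) = l-1 by ring] at this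
      have hta'' : Real.tan ((θt (l-1) s - θ (l-2) s)/4) = 0 := by
        have := htanz (l-2) s; rwa [show l-2+(1:ℤ) = l-1 by ring] at this
      have hcK'' : Real.cos ((θt (l-1) s - θ (l-2) s)/4 - (θt (l-1) s - θ l s)/4) ≠ 0 := by
        have := hc3 (l-1) s
        rw [hK (l-1) s, show l-1+(1:ℤ) = l by ring, show l-1-(1:ℤ) = l-2 by ring] at this
        rwa [show (θ l s - θ (l-2) s)/2/2
          = (θt (l-1) s - θ (l-2) s)/4 - (θt (l-1) s - θ l s)/4 by ring] at this
      have hDval : deriv (θ l) s = (2/ε)*(-Real.tan ((θt l s - θ (l+1) s)/4)) := by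
        rw [hmkdv l s, show (θ (l+1) s - θ (l-1) s)/4
          = (θt l s - θ (l-1) s)/4 - (θt l s - θ (l+1) s)/4 by ring,
          tanratio _ _ ha' hb h1, hta']
        norm_num
      have hD'val : deriv (θt l) s = (2/ε)*(-Real.tan ((θt (l-1) s - θ l s)/4)) := by
        rw [hDt, hmkdv (l-1) s, show l-1+(1:ℤ) = l by ring, show l-1-(1:ℤ) = l-2 by ring,
          show (θ l s - θ (l-2) s)/4
            = (θt (l-1) s - θ (l-2) s)/4 - (θt (l-1) s - θ l s)/4 by ring,
          tanratio _ _ hca'' hb' hcK'', hta'']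
        norm_num
      have hle : lam*ε = -1 := by
        have h' : (1/lam)*lam + ε*lam = 0*lam := by rw [← add_mul, hq0]
        rw [one_div, inv_mul_cancel₀ hlam, zero_mul] at h'
        linarith
      rw [hDval, hD'val, hta, hta']
      norm_num
      field_simp
      linear_combination (-(Real.tan ((θt l s - θ (l+1) s)/4)
        + Real.tan ((θt (l-1) s - θ l s)/4)))*hle
    · -- main case
      have hne1 : 1 + Real.tan ((θt l s - θ (l-1) s)/4) * Real.tan ((θt l s - θ (l+1) s)/4) ≠ 0 :=
        denne _ _ ha' hb h1
      have hne2 : 1 + Real.tan ((θt (l+1) s - θ l s)/4) * Real.tan ((θt (l-1) s - θ l s)/4) ≠ 0 :=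
        denne _ _ ha hb' h2
      have hD2 : (deriv (θ l) s)*((1/lam+ε)-(1/lam-ε))
          *(1+Real.tan ((θt l s - θ (l-1) s)/4)*Real.tan ((θt l s - θ (l+1) s)/4))
          = 4*(Real.tan ((θt l s - θ (l-1) s)/4) - Real.tan ((θt l s - θ (l+1) s)/4)) := by
        rw [hmkdv l s, show (θ (l+1) s - θ (l-1) s)/4
          = (θt l s - θ (l-1) s)/4 - (θt l s - θ (l+1) s)/4 by ring,
          tanratio _ _ ha' hb h1]
        field_simp
        ring
      have scb := seclem ((θt l s - θ (l+1) s)/4) hb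
      have sca := seclem ((θt (l+1) s - θ l s)/4) ha
      have hcb2 : Real.cos ((θt l s - θ (l+1) s)/4)^2 ≠ 0 := pow_ne_zero 2 hb
      have hca2 : Real.cos ((θt (l+1) s - θ l s)/4)^2 ≠ 0 := pow_ne_zero 2 ha
      have e1 : (1/lam+ε)*deriv (θt l) s/(4*Real.cos ((θt l s - θ (l+1) s)/4)^2)
          = (1/lam+ε)*deriv (θt l) s*(1+Real.tan ((θt l s - θ (l+1) s)/4)^2)/4 := by
        rw [div_eq_div_iff (by exact mul_ne_zero four_ne_zero hcb2) (by norm_num)]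
        linear_combination (-(4:ℝ)*((1/lam+ε)*deriv (θt l) s))*scb
      have e2 : (1/lam-ε)*deriv (θ l) s/(4*Real.cos ((θt (l+1) s - θ l s)/4)^2)
          = (1/lam-ε)*deriv (θ l) s*(1+Real.tan ((θt (l+1) s - θ l s)/4)^2)/4 := by
        rw [div_eq_div_iff (by exact mul_ne_zero four_ne_zero hca2) (by norm_num)]
        linear_combination (-(4:ℝ)*((1/lam-ε)*deriv (θ l) s))*sca
      have hBT2c := hBT2 l s
      rw [e1, e2] at hBT2c
      have hBT2' : (1/lam+ε)*(deriv (θt l) s)*(1+Real.tan ((θt l s - θ (l+1) s)/4)^2)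
          + (1/lam-ε)*(deriv (θ l) s)*(1+Real.tan ((θt (l+1) s - θ l s)/4)^2)
          = 4*(Real.tan ((θt (l+1) s - θ l s)/4) + Real.tan ((θt l s - θ (l+1) s)/4)) := by
        linear_combination (4:ℝ)*hBT2c
      have halg := alg (1/lam-ε) (1/lam+ε)
        (Real.tan ((θt (l+1) s - θ l s)/4)) (Real.tan ((θt l s - θ (l-1) s)/4))
        (Real.tan ((θt l s - θ (l+1) s)/4)) (Real.tan ((θt (l-1) s - θ l s)/4))
        (deriv (θ l) s) (deriv (θt l) s) hq0 hne1 hne2 H1 H2 hD2 hBT2'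
      have h24 : (deriv (θt l) s + deriv (θ l) s)/(2*lam)
          = (deriv (θt l) s + deriv (θ l) s)*((1/lam-ε)+(1/lam+ε))/4 := by
        field_simp
        ring
      rw [h24, halg]
      ring
  -- convert him
  have imlem1 : Real.sin ((θt l s - θ (l-1) s)/4 + (θt l s - θ (l+1) s)/4)
      / Real.cos ((θt l s - θ (l-1) s)/4 - (θt l s - θ (l+1) s)/4)
      = Real.tan ((θt l s - θ (l-1) s)/4 - (θt l s - θ (l+1) s)/4)
          * Real.cos (2*((θt l s - θ (l+1) s)/4)) + Real.sin (2*((θt l s - θ (l+1) s)/4)) := by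
    have h := Real.sin_add ((θt l s - θ (l-1) s)/4 - (θt l s - θ (l+1) s)/4)
      (2*((θt l s - θ (l+1) s)/4))
    rw [show (θt l s - θ (l-1) s)/4 - (θt l s - θ (l+1) s)/4 + 2*((θt l s - θ (l+1) s)/4)
      = (θt l s - θ (l-1) s)/4 + (θt l s - θ (l+1) s)/4 by ring] at h
    have htc := Real.tan_mul_cos h1
    rw [div_eq_iff h1]
    linear_combination h - Real.cos (2*((θt l s - θ (l+1) s)/4))*htc
  have imlem2 : Real.sin ((θt (l+1) s - θ l s)/4 + (θt (l-1) s - θ l s)/4)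
      / Real.cos ((θt (l+1) s - θ l s)/4 - (θt (l-1) s - θ l s)/4)
      = Real.sin (2*((θt (l+1) s - θ l s)/4))
        - Real.tan ((θt (l+1) s - θ l s)/4 - (θt (l-1) s - θ l s)/4)
          * Real.cos (2*((θt (l+1) s - θ l s)/4)) := by
    have h := Real.sin_sub (2*((θt (l+1) s - θ l s)/4))
      ((θt (l+1) s - θ l s)/4 - (θt (l-1) s - θ l s)/4)
    rw [show 2*((θt (l+1) s - θ l s)/4) - ((θt (l+1) s - θ l s)/4 - (θt (l-1) s - θ l s)/4)
      = (θt (l+1) s - θ l s)/4 + (θt (l-1) s - θ l s)/4 by ring] at h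
    have htc := Real.tan_mul_cos h2
    rw [div_eq_iff h2]
    linear_combination h + Real.cos (2*((θt (l+1) s - θ l s)/4))*htc
  have him2 : (deriv (θt l) s + deriv (θ l) s)/(2*lam)
      = (Real.tan ((θt l s - θ (l-1) s)/4 - (θt l s - θ (l+1) s)/4)
          * Real.cos (2*((θt l s - θ (l+1) s)/4)) + Real.sin (2*((θt l s - θ (l+1) s)/4)))
        + (Real.sin (2*((θt (l+1) s - θ l s)/4))
          - Real.tan ((θt (l+1) s - θ l s)/4 - (θt (l-1) s - θ l s)/4)
            * Real.cos (2*((θt (l+1) s - θ l s)/4))) := by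
    rw [him, imlem1, imlem2]
  -- derivative of γt l
  have hfun : γt l = fun u => γ l u
      + (1/(lam:ℂ)) * Complex.exp (Complex.I * (((θt l u + θ l u)/2 : ℝ):ℂ)) :=
    funext fun u => hγt' l u
  have hdg : HasDerivAt (γ l) (deriv (γ l) s) s :=
    (((hγsmooth l).differentiable (by simp)).differentiableAt).hasDerivAt
  have hdθ : HasDerivAt (fun u => (θt l u + θ l u)/2)
      ((deriv (θt l) s + deriv (θ l) s)/2) s :=
    (((((hθtsmooth l).differentiable (by simp)).differentiableAt).hasDerivAt).add
      ((((hθsmooth l).differentiable (by simp)).differentiableAt).hasDerivAt)).div_const 2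
  have hdexp : HasDerivAt (fun u => Complex.exp (Complex.I * (((θt l u + θ l u)/2 : ℝ):ℂ)))
      (Complex.exp (Complex.I * (((θt l s + θ l s)/2 : ℝ):ℂ))
        * (Complex.I * ((((deriv (θt l) s + deriv (θ l) s)/2 : ℝ)):ℂ))) s :=
    (HasDerivAt.const_mul Complex.I hdθ.ofReal_comp).cexp
  have hder : deriv (γt l) s = deriv (γ l) s
      + (1/(lam:ℂ)) * (Complex.exp (Complex.I * (((θt l s + θ l s)/2 : ℝ):ℂ))
        * (Complex.I * ((((deriv (θt l) s + deriv (θ l) s)/2 : ℝ)):ℂ))) := by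
    rw [hfun]
    exact (hdg.add (HasDerivAt.const_mul (1/(lam:ℂ)) hdexp)).deriv
  rw [hder, hmotion l s, hseg l s, part1 l s, oneSub (K l s/2) (hc3 l s),
    oneSub (Kt l s/2) (hc4 l s), hK l s, hKt l s]
  rw [show (θ (l+1) s - θ (l-1) s)/2/2
    = (θt l s - θ (l-1) s)/4 - (θt l s - θ (l+1) s)/4 by ring]
  rw [show (θt (l+1) s - θt (l-1) s)/2/2
    = (θt (l+1) s - θ l s)/4 - (θt (l-1) s - θ l s)/4 by ring]
  rw [show (θ (l+1) s + θ l s)/2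
    = (θt l s + θ l s)/2 - 2*((θt l s - θ (l+1) s)/4) by ring]
  rw [show (θt (l+1) s + θt l s)/2
    = (θt l s + θ l s)/2 + 2*((θt (l+1) s - θ l s)/4) by ring]
  have hmid : (1/(lam:ℂ)) * (Complex.exp (Complex.I * (((θt l s + θ l s)/2 : ℝ):ℂ))
        * (Complex.I * ((((deriv (θt l) s + deriv (θ l) s)/2 : ℝ)):ℂ)))
      = Complex.I * ((((deriv (θt l) s + deriv (θ l) s)/(2*lam) : ℝ)):ℂ)
        * Complex.exp (Complex.I * (((θt l s + θ l s)/2 : ℝ):ℂ)) := by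
    push_cast
    field_simp
  rw [hmid]
  exact comb ((θt l s + θ l s)/2) ((θt (l+1) s - θ l s)/4) ((θt l s - θ (l+1) s)/4)
    (Real.tan ((θt l s - θ (l-1) s)/4 - (θt l s - θ (l+1) s)/4))
    (Real.tan ((θt (l+1) s - θ l s)/4 - (θt (l-1) s - θ l s)/4))
    ((deriv (θt l) s + deriv (θ l) s)/(2*lam)) hre him2
end

section
/- Let ε ≠ 0 be a real constant and let θ_l(s) (l ∈ ℤ) be real-valued, twice differentiable functions of s ∈ ℝ solving the semi-discrete potential mKdV equation dθ_l/ds = (2/ε)·tan((θ_{l+1} − θ_{l−1})/4), with cos((θ_{l+1} − θ_{l−1})/4) ≠ 0 for all l, s. Define u_l(s') := (ε/2)·(dθ_l/ds)(2εs'). Then u satisfies the semi-discrete mKdV equation: du_l/ds' = (1 + u_l²)·(u_{l+1} − u_{l−1}) for all l ∈ ℤ and s' ∈ ℝ. -/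
theorem stmt_17 (ε : ℝ) (hε : ε ≠ 0)
    (θ : ℤ → ℝ → ℝ)
    (hθsmooth : ∀ l : ℤ, ContDiff ℝ 2 (θ l))
    (hmkdv : ∀ (l : ℤ) (s : ℝ),
      deriv (θ l) s = (2 / ε) * Real.tan ((θ (l + 1) s - θ (l - 1) s) / 4))
    (hcos : ∀ (l : ℤ) (s : ℝ), Real.cos ((θ (l + 1) s - θ (l - 1) s) / 4) ≠ 0)
    (u : ℤ → ℝ → ℝ)
    (hu : ∀ (l : ℤ) (s' : ℝ), u l s' = (ε / 2) * deriv (θ l) (2 * ε * s')) :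
    ∀ (l : ℤ) (s' : ℝ),
      deriv (u l) s' = (1 + (u l s') ^ 2) * (u (l + 1) s' - u (l - 1) s') := by
  have hdθ : ∀ l : ℤ, Differentiable ℝ (θ l) := fun l =>
    (hθsmooth l).differentiable (by norm_num)
  intro l s'
  set T : ℝ := 2 * ε * s' with hT
  have hinner : HasDerivAt (fun s => (θ (l + 1) s - θ (l - 1) s) / 4)
      ((deriv (θ (l + 1)) T - deriv (θ (l - 1)) T) / 4) T :=
    (((hdθ (l + 1)) T).hasDerivAt.sub ((hdθ (l - 1)) T).hasDerivAt).div_const 4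
  have htan : HasDerivAt Real.tan
      (1 / Real.cos ((θ (l + 1) T - θ (l - 1) T) / 4) ^ 2)
      ((θ (l + 1) T - θ (l - 1) T) / 4) := Real.hasDerivAt_tan (hcos l T)
  have hkey : HasDerivAt (deriv (θ l))
      ((2 / ε) * ((1 / Real.cos ((θ (l + 1) T - θ (l - 1) T) / 4) ^ 2) *
        ((deriv (θ (l + 1)) T - deriv (θ (l - 1)) T) / 4))) T := by
    have heq : deriv (θ l) = fun s => (2 / ε) * Real.tan ((θ (l + 1) s - θ (l - 1) s) / 4) :=
      funext fun s => hmkdv l s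
    rw [heq]
    exact ((htan.comp T hinner).const_mul (2 / ε))
  have hlin : HasDerivAt (fun t : ℝ => 2 * ε * t) (2 * ε) s' := by
    simpa using (hasDerivAt_id s').const_mul (2 * ε)
  have hul : HasDerivAt (u l)
      ((ε / 2) * ((2 / ε) * ((1 / Real.cos ((θ (l + 1) T - θ (l - 1) T) / 4) ^ 2) *
        ((deriv (θ (l + 1)) T - deriv (θ (l - 1)) T) / 4)) * (2 * ε))) s' := by
    have : HasDerivAt (fun t => (ε / 2) * deriv (θ l) (2 * ε * t))
        ((ε / 2) * ((2 / ε) * ((1 / Real.cos ((θ (l + 1) T - θ (l - 1) T) / 4) ^ 2) *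
          ((deriv (θ (l + 1)) T - deriv (θ (l - 1)) T) / 4)) * (2 * ε))) s' :=
      ((hkey.comp s' hlin).const_mul (ε / 2))
    have hfun : u l = fun t => (ε / 2) * deriv (θ l) (2 * ε * t) := funext fun t => hu l t
    rw [hfun]
    exact this
  rw [hul.deriv, hu l, hu (l + 1), hu (l - 1), hmkdv l]
  set c := Real.cos ((θ (l + 1) T - θ (l - 1) T) / 4) with hc
  have hcne : c ≠ 0 := hcos l T
  have htansq : Real.tan ((θ (l + 1) T - θ (l - 1) T) / 4) ^ 2 = 1 / c ^ 2 - 1 := by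
    rw [Real.tan_eq_sin_div_cos, div_pow]
    have hsc : Real.sin ((θ (l + 1) T - θ (l - 1) T) / 4) ^ 2 = 1 - c ^ 2 := by
      have := Real.sin_sq_add_cos_sq ((θ (l + 1) T - θ (l - 1) T) / 4)
      rw [← hc] at this; linarith
    rw [hsc, ← hc]
    field_simp
  rw [← hT]
  have h1 : ε / 2 * (2 / ε * Real.tan ((θ (l + 1) T - θ (l - 1) T) / 4)) =
      Real.tan ((θ (l + 1) T - θ (l - 1) T) / 4) := by field_simp
  rw [h1, htansq]
  field_simp
  ring
end

section
/- Let p ≠ 0 and x, t be real numbers. Then, for ε > 0 small enough that |εp| < 1, lim_{ε→0⁺} exp(−(x/ε + 6t/ε³)·log(1 − εp) − 6pt/(ε²(1 − ε²p²)) − 3p²t/ε) = exp(p x − 4p³ t), i.e. (1 − εp)^{−(x/ε + 6t/ε³)} · exp(−6pt/(ε²(1 − ε²p²)) − 3p²t/ε) converges to exp(p x − 4p³ t) as ε → 0⁺, where (1 − εp)^r denotes the real power of the positive base 1 − εp. -/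
open Filter

open Real Topology in
lemma lim_log_div : Tendsto (fun u : ℝ => Real.log (1 - u) / u) (𝓝[≠] (0:ℝ)) (𝓝 (-1)) := by
  have hd : HasDerivAt (fun u : ℝ => Real.log (1 - u)) (-1) 0 := by
    have h1 : HasDerivAt (fun u : ℝ => 1 - u) (-1) 0 := by
      exact (hasDerivAt_id (0:ℝ)).const_sub 1
    have h2 : HasDerivAt Real.log 1 ((fun u : ℝ => 1 - u) 0) := by
      simpa using Real.hasDerivAt_log (by norm_num : (1:ℝ) - 0 ≠ 0)
    have h3 := h2.comp 0 h1
    rw [one_mul] at h3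
    exact h3
  have := hasDerivAt_iff_tendsto_slope.mp hd
  refine this.congr' ?_
  filter_upwards [self_mem_nhdsWithin] with u hu
  simp [slope_def_field, div_eq_div_iff]

open Real Topology in
lemma lim_log_cubic :
    Tendsto (fun u : ℝ => (Real.log (1 - u) + u + u ^ 2 / 2) / u ^ 3) (𝓝[≠] (0:ℝ))
      (𝓝 (-(1/3))) := by
  have hne : ∀ᶠ u : ℝ in 𝓝[≠] (0:ℝ), (1 : ℝ) - u ≠ 0 ∧ u ≠ 0 := by
    have h1 : ∀ᶠ u : ℝ in 𝓝 (0:ℝ), (1:ℝ) - u ≠ 0 := by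
      have : ContinuousAt (fun u : ℝ => 1 - u) 0 := by fun_prop
      have := this.eventually_ne (by norm_num : (1:ℝ) - 0 ≠ 0)
      simpa using this
    filter_upwards [nhdsWithin_le_nhds h1, self_mem_nhdsWithin] with u h1 h2
    exact ⟨h1, h2⟩
  apply HasDerivAt.lhopital_zero_nhdsNE
    (f' := fun u => -1 / (1 - u) + 1 + u) (g' := fun u => 3 * u ^ 2)
  · filter_upwards [hne] with u hu
    have h1 : HasDerivAt (fun u : ℝ => 1 - u) (-1) u := by
      exact (hasDerivAt_id u).const_sub 1
    have h2 : HasDerivAt Real.log (1 - u)⁻¹ (1 - u) := Real.hasDerivAt_log hu.1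
    have h3 : HasDerivAt (fun u : ℝ => Real.log (1 - u)) (-1/(1-u)) u := by
      have := h2.comp u h1
      exact this.congr_deriv (by ring)
    have h4 : HasDerivAt (fun u : ℝ => u ^ 2 / 2) u u := by
      simpa using (hasDerivAt_pow 2 u).div_const 2
    exact (h3.add (hasDerivAt_id u)).add h4
  · filter_upwards with u
    simpa using hasDerivAt_pow 3 u
  · filter_upwards [hne] with u hu
    exact mul_ne_zero three_ne_zero (pow_ne_zero _ hu.2)
  · have : ContinuousAt (fun u : ℝ => Real.log (1 - u) + u + u ^ 2 / 2) 0 := by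
      apply ContinuousAt.add
      apply ContinuousAt.add
      · exact (Real.continuousAt_log (by norm_num)).comp (by fun_prop)
      · fun_prop
      · fun_prop
    have h : Tendsto (fun u : ℝ => Real.log (1 - u) + u + u ^ 2 / 2) (𝓝 0) (𝓝 0) := by
      simpa using this.tendsto
    exact h.mono_left nhdsWithin_le_nhds
  · have : Tendsto (fun u : ℝ => u ^ 3) (𝓝 0) (𝓝 (0^3)) := (continuous_pow 3).tendsto 0
    simpa using this.mono_left nhdsWithin_le_nhds
  · have key : Tendsto (fun u : ℝ => -1 / (3 * (1 - u))) (𝓝 0) (𝓝 (-(1/3))) := by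
      have : Tendsto (fun u : ℝ => -1 / (3 * (1 - u))) (𝓝 0) (𝓝 (-1 / (3 * (1 - 0)))) :=
        Tendsto.div tendsto_const_nhds ((by continuity : Continuous fun u : ℝ => 3 * (1 - u)).tendsto 0) (by norm_num)
      convert this using 2
      norm_num
    refine (key.mono_left nhdsWithin_le_nhds).congr' ?_
    filter_upwards [hne] with u hu
    have h1 : (1:ℝ) - u ≠ 0 := hu.1
    have h2 : u ≠ 0 := hu.2
    field_simp
    ring

theorem stmt_18 (p x t : ℝ) (hp : p ≠ 0) :
    Tendsto (fun ε : ℝ =>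
        Real.exp (-(x / ε + 6 * t / ε ^ 3) * Real.log (1 - ε * p)
          - 6 * p * t / (ε ^ 2 * (1 - ε ^ 2 * p ^ 2)) - 3 * p ^ 2 * t / ε))
      (nhdsWithin 0 (Set.Ioi 0))
      (nhds (Real.exp (p * x - 4 * p ^ 3 * t))) := by
  have hmap : Tendsto (fun ε : ℝ => ε * p) (nhdsWithin 0 (Set.Ioi 0))
      (nhdsWithin 0 {(0:ℝ)}ᶜ) := by
    apply tendsto_nhdsWithin_of_tendsto_nhds_of_eventually_within
    · have : Tendsto (fun ε : ℝ => ε * p) (nhds 0) (nhds (0 * p)) :=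
        (continuous_id.mul continuous_const).tendsto 0
      simpa using this.mono_left nhdsWithin_le_nhds
    · filter_upwards [self_mem_nhdsWithin] with ε hε
      exact mul_ne_zero (ne_of_gt hε) hp
  -- eventual facts
  have hev : ∀ᶠ ε : ℝ in nhdsWithin 0 (Set.Ioi 0), ε ≠ 0 ∧ (1:ℝ) - ε ^ 2 * p ^ 2 ≠ 0 := by
    have h1 : ∀ᶠ ε : ℝ in nhds (0:ℝ), (1:ℝ) - ε ^ 2 * p ^ 2 ≠ 0 := by
      have : ContinuousAt (fun ε : ℝ => 1 - ε ^ 2 * p ^ 2) 0 := by fun_prop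
      have := this.eventually_ne (by norm_num : (1:ℝ) - 0 ^ 2 * p ^ 2 ≠ 0)
      simpa using this
    filter_upwards [nhdsWithin_le_nhds h1, self_mem_nhdsWithin] with ε h1 h2
    exact ⟨ne_of_gt h2, h1⟩
  -- three pieces
  have T1 : Tendsto (fun ε : ℝ => -x * (Real.log (1 - ε * p) / (ε * p) * p))
      (nhdsWithin 0 (Set.Ioi 0)) (nhds (p * x)) := by
    have := ((lim_log_div.comp hmap).mul_const p).const_mul (-x)
    simpa [mul_comm, mul_assoc, mul_left_comm] using this
  have T2 : Tendsto (fun ε : ℝ =>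
      -6 * t * ((Real.log (1 - ε * p) + ε * p + (ε * p) ^ 2 / 2) / (ε * p) ^ 3 * p ^ 3))
      (nhdsWithin 0 (Set.Ioi 0)) (nhds (2 * p ^ 3 * t)) := by
    have := ((lim_log_cubic.comp hmap).mul_const (p ^ 3)).const_mul (-6 * t)
    have e : (2 * p ^ 3 * t) = -6 * t * (-(1 / 3) * p ^ 3) := by ring
    rw [e]
    exact this
  have T3 : Tendsto (fun ε : ℝ => -(6 * p ^ 3 * t) / (1 - ε ^ 2 * p ^ 2))
      (nhdsWithin 0 (Set.Ioi 0)) (nhds (-(6 * p ^ 3 * t))) := by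
    have : Tendsto (fun ε : ℝ => -(6 * p ^ 3 * t) / (1 - ε ^ 2 * p ^ 2)) (nhds 0)
        (nhds (-(6 * p ^ 3 * t) / (1 - 0 ^ 2 * p ^ 2))) :=
      Tendsto.div tendsto_const_nhds
        ((by continuity : Continuous fun ε : ℝ => 1 - ε ^ 2 * p ^ 2).tendsto 0) (by norm_num)
    have h := this.mono_left (nhdsWithin_le_nhds (s := Set.Ioi (0:ℝ)))
    simpa using h
  have hsum := (T1.add T2).add T3
  have harg : Tendsto (fun ε : ℝ =>
        -(x / ε + 6 * t / ε ^ 3) * Real.log (1 - ε * p)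
          - 6 * p * t / (ε ^ 2 * (1 - ε ^ 2 * p ^ 2)) - 3 * p ^ 2 * t / ε)
      (nhdsWithin 0 (Set.Ioi 0)) (nhds (p * x - 4 * p ^ 3 * t)) := by
    have heq : (p * x - 4 * p ^ 3 * t) =
        p * x + 2 * p ^ 3 * t + -(6 * p ^ 3 * t) := by ring
    rw [heq]
    refine hsum.congr' ?_
    filter_upwards [hev] with ε hε
    obtain ⟨h1, h2⟩ := hε
    field_simp
    ring
  exact (Real.continuous_exp.tendsto _).comp harg
end

section
/- Let p ≠ 0, ε, s, l be real numbers with |εp| < 1. Then, as δ → 0 from above (δ > 0 small enough that (1 − (δ+ε)p) > 0 and (1 − (δ−ε)p) > 0), the quantity exp(s·log(1 − ε²p²)/(2δ)) · exp(−((s/δ + l)/2)·log(1 − (δ+ε)p) − ((s/δ − l)/2)·log(1 − (δ−ε)p)) converges to exp(p s/(1 − ε²p²)) · ((1 + εp)/(1 − εp))^{l/2}. -/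
open Filter

theorem stmt_19 (p ε s l : ℝ) (hp : p ≠ 0) (h : |ε * p| < 1) :
    Tendsto (fun δ : ℝ =>
        Real.exp (s * Real.log (1 - ε ^ 2 * p ^ 2) / (2 * δ)) *
          Real.exp (-((s / δ + l) / 2) * Real.log (1 - (δ + ε) * p)
            - ((s / δ - l) / 2) * Real.log (1 - (δ - ε) * p)))
      (nhdsWithin 0 (Set.Ioi 0))
      (nhds (Real.exp (p * s / (1 - ε ^ 2 * p ^ 2))
        * ((1 + ε * p) / (1 - ε * p)) ^ (l / 2))) := by
  obtain ⟨hneg, hpos⟩ := abs_lt.mp h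
  have h1 : (0:ℝ) < 1 - ε * p := by linarith
  have h2 : (0:ℝ) < 1 + ε * p := by linarith
  have h3 : (0:ℝ) < 1 - ε ^ 2 * p ^ 2 := by nlinarith
  set g : ℝ → ℝ := fun δ => Real.log (1 - (δ + ε) * p) + Real.log (1 - (δ - ε) * p)
    with hgdef
  have hg0 : g 0 = Real.log (1 - ε ^ 2 * p ^ 2) := by
    have : (1 : ℝ) - ε ^ 2 * p ^ 2 = (1 - ε * p) * (1 + ε * p) := by ring
    rw [hgdef]
    simp only [zero_add, zero_sub]
    rw [this, Real.log_mul h1.ne' h2.ne']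
    ring_nf
  -- derivative of g at 0
  have d1 : HasDerivAt (fun δ : ℝ => 1 - (δ + ε) * p) (-p) 0 := by
    have := (((hasDerivAt_id (0:ℝ)).add_const ε).mul_const p).const_sub 1
    simpa using this
  have d2 : HasDerivAt (fun δ : ℝ => 1 - (δ - ε) * p) (-p) 0 := by
    have := (((hasDerivAt_id (0:ℝ)).sub_const ε).mul_const p).const_sub 1
    simpa using this
  have e1 : (1 : ℝ) - (0 + ε) * p = 1 - ε * p := by ring
  have e2 : (1 : ℝ) - (0 - ε) * p = 1 + ε * p := by ring
  have hd : HasDerivAt g (-p / (1 - ε * p) + -p / (1 + ε * p)) 0 := by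
    have l1 := d1.log (by rw [e1]; exact h1.ne')
    have l2 := d2.log (by rw [e2]; exact h2.ne')
    rw [e1] at l1; rw [e2] at l2
    exact l1.add l2
  have hslope : Tendsto (slope g 0) (nhdsWithin 0 (Set.Ioi 0))
      (nhds (-p / (1 - ε * p) + -p / (1 + ε * p))) := by
    refine (hasDerivAt_iff_tendsto_slope.mp hd).mono_left (nhdsWithin_mono 0 ?_)
    intro x hx
    exact (ne_of_gt hx)
  -- continuous part
  have hcont : Tendsto (fun δ : ℝ => Real.log (1 - (δ + ε) * p) - Real.log (1 - (δ - ε) * p))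
      (nhdsWithin 0 (Set.Ioi 0)) (nhds (Real.log (1 - ε * p) - Real.log (1 + ε * p))) := by
    have c1 : ContinuousAt (fun δ : ℝ => Real.log (1 - (δ + ε) * p)) 0 :=
      ContinuousAt.log (by fun_prop) (by rw [e1]; exact h1.ne')
    have c2 : ContinuousAt (fun δ : ℝ => Real.log (1 - (δ - ε) * p)) 0 :=
      ContinuousAt.log (by fun_prop) (by rw [e2]; exact h2.ne')
    have := (c1.sub c2).continuousWithinAt (s := Set.Ioi (0:ℝ))
    simpa [ContinuousWithinAt, e1, e2, Pi.sub_def] using this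
  -- combined exponent limit
  have key : Tendsto (fun δ : ℝ =>
      (-(s/2)) * slope g 0 δ + (-(l/2)) *
        (Real.log (1 - (δ + ε) * p) - Real.log (1 - (δ - ε) * p)))
      (nhdsWithin 0 (Set.Ioi 0))
      (nhds ((-(s/2)) * (-p / (1 - ε * p) + -p / (1 + ε * p)) +
        (-(l/2)) * (Real.log (1 - ε * p) - Real.log (1 + ε * p)))) :=
    ((hslope.const_mul _).add (hcont.const_mul _))
  have hval : (-(s/2)) * (-p / (1 - ε * p) + -p / (1 + ε * p)) +
      (-(l/2)) * (Real.log (1 - ε * p) - Real.log (1 + ε * p))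
      = p * s / (1 - ε ^ 2 * p ^ 2) + l / 2 * Real.log ((1 + ε * p) / (1 - ε * p)) := by
    rw [Real.log_div h2.ne' h1.ne']
    have : (-(s/2)) * (-p / (1 - ε * p) + -p / (1 + ε * p)) = p * s / (1 - ε ^ 2 * p ^ 2) := by
      rw [div_add_div _ _ h1.ne' h2.ne', mul_div_assoc', div_eq_div_iff (mul_ne_zero h1.ne' h2.ne') h3.ne']
      ring
    rw [this]; ring
  rw [hval] at key
  have hexp := (Real.continuous_exp.continuousAt.tendsto.comp key)
  have heq : ∀ δ ∈ Set.Ioi (0:ℝ),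
      Real.exp ((-(s/2)) * slope g 0 δ + (-(l/2)) *
        (Real.log (1 - (δ + ε) * p) - Real.log (1 - (δ - ε) * p))) =
      Real.exp (s * Real.log (1 - ε ^ 2 * p ^ 2) / (2 * δ)) *
        Real.exp (-((s / δ + l) / 2) * Real.log (1 - (δ + ε) * p)
          - ((s / δ - l) / 2) * Real.log (1 - (δ - ε) * p)) := by
    intro δ hδ
    have hδ0 : δ ≠ 0 := ne_of_gt hδ
    rw [← Real.exp_add]
    congr 1
    rw [slope_def_field, hg0]
    simp only [hgdef]
    field_simp
    ring
  have htarget : Real.exp (p * s / (1 - ε ^ 2 * p ^ 2))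
      * ((1 + ε * p) / (1 - ε * p)) ^ (l / 2) =
      Real.exp (p * s / (1 - ε ^ 2 * p ^ 2) + l / 2 * Real.log ((1 + ε * p) / (1 - ε * p))) := by
    rw [Real.rpow_def_of_pos (div_pos h2 h1), ← Real.exp_add]
    ring_nf
  rw [htarget]
  exact hexp.congr' (eventually_nhdsWithin_of_forall heq)
end
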